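/- arXiv:1804.03514 — 9 statements merged into one kernel-verified Lean document; each statement's English description precedes it below -/
import Mathlib

section
/- Let q ≥ 3, d ≥ 2 and β ∈ (0,1). Suppose that for all α > 1 and all colours c₁, c₂ ∈ [q] it holds that M_{α,c₁,c₂,β} < α^{1/d}. Then γ(q,β,d,n) → 1 as n → ∞. -/
open Filter

/-- Weight of a configuration of the `q`-state Potts model with parameter `β`
on the `d`-ary tree of height `n`.  A vertex of the tree is a pair of a depth
`k ≤ n` and a path of length `k`; the parent of a vertex of depth `k+1` is
obtained by dropping the last step of its path.  The weight is
`β ^ (number of monochromatic edges)`. -/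
noncomputable def treeWeight (q d n : ℕ) (β : ℝ)
    (σ : (Σ k : Fin (n + 1), (Fin k → Fin d)) → Fin q) : ℝ :=
  β ^ (Finset.univ.filter (fun p : Σ k : Fin n, (Fin (k + 1) → Fin d) =>
        σ ⟨p.1.succ, p.2⟩ = σ ⟨p.1.castSucc, fun i => p.2 i.castSucc⟩)).card

/-- The conditional probability, under the Gibbs distribution of the `q`-state
Potts model with parameter `β` on the `d`-ary tree `𝕋_{d,n}` of height `n`,
that the root receives colour `c` given that the leaves (the depth-`n`
vertices) are coloured according to `τ`. -/
noncomputable def condRootProb (q d n : ℕ) (β : ℝ)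
    (τ : (Fin n → Fin d) → Fin q) (c : Fin q) : ℝ :=
  (∑ σ ∈ Finset.univ.filter
      (fun σ : (Σ k : Fin (n + 1), (Fin k → Fin d)) → Fin q =>
        σ ⟨⟨0, n.succ_pos⟩, Fin.elim0⟩ = c ∧
          ∀ f : Fin n → Fin d, σ ⟨⟨n, n.lt_succ_self⟩, f⟩ = τ f),
      treeWeight q d n β σ) /
  (∑ σ ∈ Finset.univ.filter
      (fun σ : (Σ k : Fin (n + 1), (Fin k → Fin d)) → Fin q =>
        ∀ f : Fin n → Fin d, σ ⟨⟨n, n.lt_succ_self⟩, f⟩ = τ f),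
      treeWeight q d n β σ)

/-- `γ(q,β,d,n)`: the maximum, over boundary configurations `τ` and colours
`c₁, c₂`, of the ratio of conditional root marginals. -/
noncomputable def pottsGamma (q d : ℕ) (β : ℝ) (n : ℕ) : ℝ :=
  ⨆ τ : (Fin n → Fin d) → Fin q, ⨆ c₁ : Fin q, ⨆ c₂ : Fin q,
    condRootProb q d n β τ c₁ / condRootProb q d n β τ c₂

/-- The function `g_{c₁,c₂,β}` of the two-step recursion. -/
noncomputable def gfun (q d : ℕ) (β : ℝ) (c₁ c₂ : Fin q) (p : Fin d → Fin q → ℝ) : ℝ :=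
  ∏ k : Fin d,
    (1 - ((1 - β) * (p k c₁ - p k c₂)) /
      (β * p k c₂ + ∑ c ∈ Finset.univ.erase c₂, p k c))

/-- The function `h_{c₁,c₂,β}` of the two-step recursion. -/
noncomputable def hfun (q d : ℕ) (β : ℝ) (c₁ c₂ : Fin q) (p : Fin d → Fin q → ℝ) : ℝ :=
  1 + ((1 - β) * (1 - gfun q d β c₁ c₂ p)) /
    (β + ∑ c ∈ Finset.univ.erase c₂, gfun q d β c c₂ p)

/-- `Δ_α`: probability vectors on `q` colours whose entries are within a
factor `α` of each other. -/
def simplexAlpha (q : ℕ) (α : ℝ) : Set (Fin q → ℝ) :=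
  {p | (∀ i, 0 ≤ p i) ∧ (∑ i, p i) = 1 ∧ ∀ i j, p i ≤ α * p j}

/-- `M_{α,c₁,c₂,β}`: the maximum of `h_{c₁,c₂,β}` over `Δ_α^d`. -/
noncomputable def Mval (q d : ℕ) (α β : ℝ) (c₁ c₂ : Fin q) : ℝ :=
  sSup ((hfun q d β c₁ c₂) '' {p | ∀ k, p k ∈ simplexAlpha q α})

/-- `Ex_c(α)`: vectors with entries in `{1, α}`, whose `c`-entry is `1`
and with at least one entry equal to `α`. -/
def exSet (q : ℕ) (c : Fin q) (α : ℝ) : Set (Fin q → ℝ) :=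
  {p | (∀ c', p c' = 1 ∨ p c' = α) ∧ p c = 1 ∧ ∃ c', p c' = α}

/-- The function `f_u(d,β,x,y)` from the one-step analysis. -/
noncomputable def fU (d : ℕ) (β x y : ℝ) : ℝ :=
  (1 - (1 - β) * y) ^ d /
    ((1 - (1 - β) * y) ^ d +
      2 * (1 - (1 - β) * x) ^ ((d : ℝ) / 2) *
        (1 - (1 - β) * (1 - x - y)) ^ ((d : ℝ) / 2))

/-- The function `f_ℓ(d,β,x,y)` from the one-step analysis. -/
noncomputable def fL (d : ℕ) (β x y : ℝ) : ℝ :=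
  (1 - (1 - β) * x) ^ d /
    ((1 - (1 - β) * x) ^ d + (1 - (1 - β) * y) ^ d +
      (1 - (1 - β) * (1 - x - y)) ^ d)

/-- The pair of sequences `(u_n(d,β), ℓ_n(d,β))`, defined by
`u_0 = 1`, `ℓ_0 = 0`, `u_{n+1} = f_u(d,β,u_n,ℓ_n)`, `ℓ_{n+1} = f_ℓ(d,β,u_n,ℓ_n)`. -/
noncomputable def ulSeq (d : ℕ) (β : ℝ) : ℕ → ℝ × ℝ
  | 0 => (1, 0)
  | n + 1 =>
      (fU d β (ulSeq d β n).1 (ulSeq d β n).2,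
       fL d β (ulSeq d β n).1 (ulSeq d β n).2)

/-!
Conditioned on the leaves, the root marginals of the tree obey the belief-propagation recursion:
the marginal at the root is a function of the marginals at the roots of its `d` subtrees. Over
two levels this recursion multiplies the ratio of two root marginals by a product of `d` values
of `h`, evaluated at marginals of the grandchildren; these lie in `Δ_α` as soon as `γ ≤ α` one
level further down. So `γ(n+1) ≤ α` gives `γ(n+3) ≤ M^d`, and compactness of
`{(α, p) : α ∈ [1 + ε, B], p ∈ Δ_α^d}` turns `M < α^{1/d}` into `γ(n+3) ≤ α - δ` with `δ`
uniform in `α`. Since `h ≤ 1/β`, `γ(n+3) ≤ β^{-d}`, and finitely many such steps bring `γ`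
below `1 + ε`; on the other hand `γ ≥ 1`.
-/

namespace Potts

open Finset

lemma prod_le_of_forall_pow_card_le {ι : Type*} {s : Finset ι} {x : ι → ℝ} {y : ℝ}
    (hs : s.Nonempty) (hx0 : ∀ i ∈ s, 0 ≤ x i) (hx : ∀ i ∈ s, x i ^ #s ≤ y) :
    ∏ i ∈ s, x i ≤ y := by
  obtain ⟨i, hi⟩ := hs
  have hy : 0 ≤ y := (pow_nonneg (hx0 i hi) _).trans (hx i hi)
  refine le_of_pow_le_pow_left₀ (card_ne_zero_of_mem hi) hy ?_
  rw [← prod_pow, ← prod_const]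
  exact prod_le_prod (fun i hi => pow_nonneg (hx0 i hi) _) hx

lemma eventually_le_of_forall_eventually_le_sub {u : ℕ → ℝ} {a b δ : ℝ} (hδ : 0 < δ)
    (hb : ∀ᶠ n in atTop, u n ≤ b)
    (hstep : ∀ α ∈ Set.Icc a b, (∀ᶠ n in atTop, u n ≤ α) → ∀ᶠ n in atTop, u n ≤ α - δ) :
    ∀ᶠ n in atTop, u n ≤ a := by
  have hj : ∀ j : ℕ, ∀ᶠ n in atTop, u n ≤ max (b - j * δ) a := by
    intro j
    induction j with
    | zero => simpa using hb.mono fun n hn => le_max_of_le_left hn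
    | succ j ih =>
      rcases le_total (b - j * δ) a with h | h
      · refine ih.mono fun n hn => hn.trans ?_
        rw [max_eq_right h]
        exact le_max_right _ _
      · have hα : b - j * δ ∈ Set.Icc a b := ⟨h, by nlinarith [j.cast_nonneg (α := ℝ)]⟩
        rw [max_eq_left h] at ih
        refine (hstep _ hα ih).mono fun n hn => le_max_of_le_left ?_
        push_cast
        linarith
  obtain ⟨j, hj'⟩ := exists_nat_gt ((b - a) / δ)
  rw [div_lt_iff₀ hδ] at hj'
  exact (hj j).mono fun n hn => hn.trans (max_le (by linarith) le_rfl)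

section Tree

variable {q d n : ℕ}

abbrev Vertex (d n : ℕ) := Σ k : Fin (n + 1), (Fin k → Fin d)

abbrev Config (q d n : ℕ) := Vertex d n → Fin q

/-- Edges are indexed by their lower endpoint, a vertex of depth `k + 1`. -/
abbrev Edge (d n : ℕ) := Σ k : Fin n, (Fin (k + 1) → Fin d)

def root (d n : ℕ) : Vertex d n := ⟨⟨0, n.succ_pos⟩, Fin.elim0⟩

def leaf (f : Fin n → Fin d) : Vertex d n := ⟨⟨n, n.lt_succ_self⟩, f⟩

@[simp] lemma mk_zero_eq_root (h : 0 < n + 1) (f : Fin 0 → Fin d) :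
    (⟨⟨0, h⟩, f⟩ : Vertex d n) = root d n :=
  Sigma.ext rfl (heq_of_eq (funext fun i => i.elim0))

def glue (c : Fin q) (g : Fin d → Config q d n) : Config q d (n + 1)
  | ⟨⟨0, _⟩, _⟩ => c
  | ⟨⟨k + 1, hk⟩, f⟩ => g (f 0) ⟨⟨k, by omega⟩, Fin.tail f⟩

def subtree (k : Fin d) (σ : Config q d (n + 1)) : Config q d n :=
  fun v => σ ⟨⟨v.1 + 1, by omega⟩, Fin.cons k v.2⟩

lemma subtree_glue (c : Fin q) (g : Fin d → Config q d n) (k : Fin d) :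
    subtree k (glue c g) = g k := by
  funext ⟨⟨j, hj⟩, f⟩
  simp only [subtree, glue, Fin.cons_zero, Fin.tail_cons]

lemma glue_subtree (σ : Config q d (n + 1)) :
    glue (σ (root d (n + 1))) (fun k => subtree k σ) = σ := by
  funext ⟨⟨j, hj⟩, f⟩
  cases j with
  | zero => exact congrArg σ (mk_zero_eq_root _ f).symm
  | succ j =>
    simp only [glue, subtree]
    exact congrArg σ (Sigma.ext rfl (heq_of_eq (Fin.cons_self_tail f)))

def edgeEquiv (d n : ℕ) : Edge d (n + 1) ≃ Fin d ⊕ Fin d × Edge d n where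
  toFun
    | ⟨⟨0, _⟩, f⟩ => .inl (f 0)
    | ⟨⟨j + 1, hj⟩, f⟩ => .inr (f 0, ⟨⟨j, by omega⟩, Fin.tail f⟩)
  invFun
    | .inl a => ⟨⟨0, n.succ_pos⟩, fun _ => a⟩
    | .inr (a, ⟨⟨j, hj⟩, g⟩) => ⟨⟨j + 1, by omega⟩, Fin.cons a g⟩
  left_inv := by
    rintro ⟨⟨_ | j, hj⟩, f⟩
    · exact Sigma.ext rfl
        (heq_of_eq (funext fun i => congrArg f (Subsingleton.elim (α := Fin 1) _ _)))
    · exact Sigma.ext rfl (heq_of_eq (Fin.cons_self_tail f))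
  right_inv := by
    rintro (a | ⟨a, ⟨⟨j, hj⟩, g⟩⟩)
    · rfl
    · simp only [Fin.cons_zero, Fin.tail_cons]

lemma treeWeight_eq_prod (β : ℝ) (σ : Config q d n) :
    treeWeight q d n β σ = ∏ e : Edge d n,
      if σ ⟨e.1.succ, e.2⟩ = σ ⟨e.1.castSucc, fun i => e.2 i.castSucc⟩ then β else 1 := by
  rw [prod_ite, prod_const, prod_const_one, mul_one]
  rfl

lemma treeWeight_glue (β : ℝ) (c : Fin q) (g : Fin d → Config q d n) :
    treeWeight q d (n + 1) β (glue c g) =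
      ∏ k, (if g k (root d n) = c then β else 1) * treeWeight q d n β (g k) := by
  rw [prod_mul_distrib, treeWeight_eq_prod, ← (edgeEquiv d n).symm.prod_comp,
    Fintype.prod_sum_type, Fintype.prod_prod_type]
  congr 1
  · refine prod_congr rfl fun k _ => ?_
    simp only [edgeEquiv, Equiv.coe_fn_symm_mk, Fin.succ_mk, Fin.castSucc_mk, glue,
      mk_zero_eq_root]
    rfl
  · refine prod_congr rfl fun k _ => ?_
    rw [treeWeight_eq_prod]
    refine prod_congr rfl fun ⟨⟨j, hj⟩, f⟩ _ => ?_
    simp only [edgeEquiv, Equiv.coe_fn_symm_mk, Fin.succ_mk, Fin.castSucc_mk, glue,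
      Fin.castSucc_zero, Fin.cons_zero, Fin.tail_cons]
    rfl

end Tree

section PartitionFunction

variable {q d n : ℕ} {β : ℝ}

def compatible (τ : (Fin n → Fin d) → Fin q) : Finset (Config q d n) :=
  univ.filter fun σ => ∀ f, σ (leaf f) = τ f

noncomputable def partitionFn (q d n : ℕ) (β : ℝ) (τ : (Fin n → Fin d) → Fin q) (c : Fin q) : ℝ :=
  ∑ σ ∈ (compatible τ).filter (fun σ => σ (root d n) = c), treeWeight q d n β σ

def τsub (k : Fin d) (τ : (Fin (n + 1) → Fin d) → Fin q) : (Fin n → Fin d) → Fin q :=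
  fun f => τ (Fin.cons k f)

lemma sum_compatible_mul_treeWeight (τ : (Fin n → Fin d) → Fin q) (φ : Fin q → ℝ) :
    ∑ σ ∈ compatible τ, φ (σ (root d n)) * treeWeight q d n β σ =
      ∑ c, φ c * partitionFn q d n β τ c := by
  rw [← sum_fiberwise (compatible τ) (fun σ => σ (root d n))]
  refine sum_congr rfl fun c _ => ?_
  rw [partitionFn, mul_sum]
  exact sum_congr rfl fun σ hσ => by rw [(mem_filter.mp hσ).2]

lemma sum_partitionFn (τ : (Fin n → Fin d) → Fin q) :
    ∑ c, partitionFn q d n β τ c = ∑ σ ∈ compatible τ, treeWeight q d n β σ := by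
  simpa only [one_mul] using (sum_compatible_mul_treeWeight (β := β) τ fun _ => 1).symm

lemma condRootProb_eq_div (τ : (Fin n → Fin d) → Fin q) (c : Fin q) :
    condRootProb q d n β τ c = partitionFn q d n β τ c / ∑ c', partitionFn q d n β τ c' := by
  rw [condRootProb, sum_partitionFn, partitionFn, compatible, filter_filter]
  congr 1
  exact sum_congr (filter_congr fun σ _ => and_comm) fun _ _ => rfl

lemma sum_partitionFn_pos [NeZero q] (hβ : 0 < β) (τ : (Fin n → Fin d) → Fin q) :
    0 < ∑ c, partitionFn q d n β τ c := by
  rw [sum_partitionFn]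
  refine sum_pos (fun σ _ => pow_pos hβ _) ⟨fun v =>
    if h : (v.1 : ℕ) = n then τ fun i => v.2 (i.cast h.symm) else 0, ?_⟩
  simp only [compatible, mem_filter, mem_univ, true_and]
  exact fun f => dif_pos rfl

lemma partitionFn_succ_eq_sum_glue (τ : (Fin (n + 1) → Fin d) → Fin q) (c : Fin q) :
    partitionFn q d (n + 1) β τ c =
      ∑ g ∈ Fintype.piFinset fun k => compatible (τsub k τ),
        treeWeight q d (n + 1) β (glue c g) := by
  refine sum_nbij' (fun σ k => subtree k σ) (glue c) ?_ ?_ ?_ ?_ ?_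
  · intro σ hσ
    simp only [compatible, mem_filter, mem_univ, true_and, Fintype.mem_piFinset] at hσ ⊢
    exact fun k f => hσ.1 (Fin.cons k f)
  · intro g hg
    simp only [compatible, mem_filter, mem_univ, true_and, Fintype.mem_piFinset] at hg ⊢
    exact ⟨fun f => (hg (f 0) (Fin.tail f)).trans (congrArg τ (Fin.cons_self_tail f)), rfl⟩
  · intro σ hσ
    simp only [compatible, mem_filter] at hσ
    simpa only [hσ.2] using glue_subtree σ
  · exact fun g _ => funext (subtree_glue c g)
  · intro σ hσ
    simp only [compatible, mem_filter] at hσ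
    rw [← hσ.2, glue_subtree]

lemma partitionFn_succ (τ : (Fin (n + 1) → Fin d) → Fin q) (c : Fin q) :
    partitionFn q d (n + 1) β τ c =
      ∏ k, ∑ c', (if c' = c then β else 1) * partitionFn q d n β (τsub k τ) c' := by
  simp only [partitionFn_succ_eq_sum_glue, treeWeight_glue, ← sum_compatible_mul_treeWeight]
  exact (prod_univ_sum (fun k => compatible (τsub k τ))
    fun k σ => (if σ (root d n) = c then β else 1) * treeWeight q d n β σ).symm

lemma sum_ite_mul_partitionFn (τ : (Fin n → Fin d) → Fin q) (c : Fin q) :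
    ∑ c', (if c' = c then β else 1) * partitionFn q d n β τ c' =
      (∑ c', partitionFn q d n β τ c') - (1 - β) * partitionFn q d n β τ c := by
  have h : ∀ c', (if c' = c then β else 1) * partitionFn q d n β τ c' =
      partitionFn q d n β τ c' - (1 - β) * if c' = c then partitionFn q d n β τ c' else 0 := by
    intro c'
    split_ifs <;> ring
  simp only [h, sum_sub_distrib, ← mul_sum, sum_ite_eq', mem_univ, if_true]

end PartitionFunction

section Recursion

variable {q d : ℕ} {β : ℝ} {p : Fin d → Fin q → ℝ}

lemma le_one_sub_one_sub_mul {x : ℝ} (hβ1 : β ≤ 1) (hx : x ≤ 1) : β ≤ 1 - (1 - β) * x := by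
  nlinarith

lemma one_sub_one_sub_mul_le_one {x : ℝ} (hβ1 : β ≤ 1) (hx : 0 ≤ x) : 1 - (1 - β) * x ≤ 1 := by
  nlinarith

lemma mul_add_sum_erase_eq {x : Fin q → ℝ} (hx : x ∈ stdSimplex ℝ (Fin q)) (c : Fin q) :
    β * x c + ∑ c' ∈ univ.erase c, x c' = 1 - (1 - β) * x c := by
  rw [sum_erase_eq_sub (mem_univ c), hx.2]
  ring

noncomputable def rootWeight (β : ℝ) (p : Fin d → Fin q → ℝ) (c : Fin q) : ℝ :=
  ∏ k, (1 - (1 - β) * p k c)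

noncomputable def bpStep (β : ℝ) (p : Fin d → Fin q → ℝ) (c : Fin q) : ℝ :=
  rootWeight β p c / ∑ c', rootWeight β p c'

lemma rootWeight_pos (hβ : 0 < β) (hβ1 : β ≤ 1) (hp : ∀ k, p k ∈ stdSimplex ℝ (Fin q))
    (c : Fin q) : 0 < rootWeight β p c :=
  prod_pos fun k _ =>
    hβ.trans_le (le_one_sub_one_sub_mul hβ1 (mem_Icc_of_mem_stdSimplex (hp k) c).2)

lemma bpStep_mem_stdSimplex [NeZero q] (hβ : 0 < β) (hβ1 : β ≤ 1)
    (hp : ∀ k, p k ∈ stdSimplex ℝ (Fin q)) : bpStep β p ∈ stdSimplex ℝ (Fin q) := by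
  have hS : 0 < ∑ c, rootWeight β p c :=
    sum_pos (fun c _ => rootWeight_pos hβ hβ1 hp c) univ_nonempty
  refine ⟨fun c => div_nonneg (rootWeight_pos hβ hβ1 hp c).le hS.le, ?_⟩
  simp only [bpStep, ← sum_div, div_self hS.ne']

lemma bpStep_div_bpStep (hβ : 0 < β) (hβ1 : β ≤ 1) (hp : ∀ k, p k ∈ stdSimplex ℝ (Fin q))
    (c₁ c₂ : Fin q) :
    bpStep β p c₁ / bpStep β p c₂ = ∏ k, (1 - (1 - β) * p k c₁) / (1 - (1 - β) * p k c₂) := by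
  have hS : 0 < ∑ c, rootWeight β p c :=
    sum_pos (fun c _ => rootWeight_pos hβ hβ1 hp c) ⟨c₁, mem_univ c₁⟩
  rw [bpStep, bpStep, div_div_div_cancel_right₀ hS.ne', rootWeight, rootWeight, prod_div_distrib]

lemma gfun_eq_div_rootWeight (hβ : 0 < β) (hβ1 : β ≤ 1) (hp : ∀ k, p k ∈ stdSimplex ℝ (Fin q))
    (c₁ c₂ : Fin q) : gfun q d β c₁ c₂ p = rootWeight β p c₁ / rootWeight β p c₂ := by
  rw [gfun, rootWeight, rootWeight, ← prod_div_distrib]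
  refine prod_congr rfl fun k _ => ?_
  have hD : 0 < 1 - (1 - β) * p k c₂ :=
    hβ.trans_le (le_one_sub_one_sub_mul hβ1 (mem_Icc_of_mem_stdSimplex (hp k) c₂).2)
  rw [mul_add_sum_erase_eq (hp k)]
  field_simp
  ring

/-- `h(p)` is the factor that a vertex whose children have root marginals `p k` contributes to
the ratio of two marginals at its parent (compare `bpStep_div_bpStep`). -/
lemma hfun_eq_div_bpStep (hβ : 0 < β) (hβ1 : β ≤ 1) (hp : ∀ k, p k ∈ stdSimplex ℝ (Fin q))
    (c₁ c₂ : Fin q) :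
    hfun q d β c₁ c₂ p = (1 - (1 - β) * bpStep β p c₁) / (1 - (1 - β) * bpStep β p c₂) := by
  have hw := rootWeight_pos hβ hβ1 hp
  have hS : rootWeight β p c₂ ≤ ∑ c, rootWeight β p c :=
    single_le_sum (fun c _ => (hw c).le) (mem_univ c₂)
  have hsum : ∑ c ∈ univ.erase c₂, gfun q d β c c₂ p =
      (∑ c, rootWeight β p c - rootWeight β p c₂) / rootWeight β p c₂ := by
    simp only [gfun_eq_div_rootWeight hβ hβ1 hp]
    rw [← sum_div, sum_erase_eq_sub (mem_univ c₂)]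
  rw [hfun, hsum, gfun_eq_div_rootWeight hβ hβ1 hp, bpStep, bpStep]
  have hb := hw c₂
  generalize ∑ c, rootWeight β p c = S at hS ⊢
  generalize rootWeight β p c₁ = a
  generalize rootWeight β p c₂ = b at hS hb ⊢
  have hS0 : 0 < S := hb.trans_le hS
  have hden : 0 < β * b + (S - b) := by nlinarith
  have hden' : 0 < S - (1 - β) * b := by nlinarith
  have hdiv : ∀ x, 1 - (1 - β) * (x / S) = (S - (1 - β) * x) / S := fun x => by field_simp
  rw [hdiv, hdiv, div_div_div_cancel_right₀ hS0.ne']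
  field_simp
  ring

lemma hfun_mem_Icc (hβ : 0 < β) (hβ1 : β ≤ 1) (hp : ∀ k, p k ∈ stdSimplex ℝ (Fin q))
    (c₁ c₂ : Fin q) : hfun q d β c₁ c₂ p ∈ Set.Icc 0 β⁻¹ := by
  have : NeZero q := NeZero.of_pos c₁.pos
  have hb := mem_Icc_of_mem_stdSimplex (bpStep_mem_stdSimplex hβ hβ1 hp)
  have hnum := one_sub_one_sub_mul_le_one hβ1 (hb c₁).1
  have hden := le_one_sub_one_sub_mul hβ1 (hb c₂).2
  rw [hfun_eq_div_bpStep hβ hβ1 hp, ← one_div]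
  exact ⟨div_nonneg (hβ.le.trans (le_one_sub_one_sub_mul hβ1 (hb c₁).2)) (hβ.le.trans hden),
    div_le_div₀ zero_le_one hnum hβ hden⟩

lemma bpStep_pos (hβ : 0 < β) (hβ1 : β ≤ 1) (hp : ∀ k, p k ∈ stdSimplex ℝ (Fin q))
    (c : Fin q) : 0 < bpStep β p c :=
  div_pos (rootWeight_pos hβ hβ1 hp c)
    (sum_pos (fun c _ => rootWeight_pos hβ hβ1 hp c) ⟨c, mem_univ c⟩)

end Recursion

section Marginals

variable {q d n : ℕ} {β : ℝ} [NeZero q]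

lemma condRootProb_mem_stdSimplex (hβ : 0 < β) (τ : (Fin n → Fin d) → Fin q) :
    condRootProb q d n β τ ∈ stdSimplex ℝ (Fin q) := by
  have hS := sum_partitionFn_pos (d := d) hβ τ
  refine ⟨fun c => ?_, ?_⟩
  · rw [condRootProb_eq_div]
    exact div_nonneg (sum_nonneg fun σ _ => (pow_pos hβ _).le) hS.le
  · simp only [condRootProb_eq_div, ← sum_div, div_self hS.ne']

lemma condRootProb_succ (hβ : 0 < β) (τ : (Fin (n + 1) → Fin d) → Fin q) :
    condRootProb q d (n + 1) β τ = bpStep β fun k => condRootProb q d n β (τsub k τ) := by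
  have hD : 0 < ∏ k, ∑ c, partitionFn q d n β (τsub k τ) c :=
    prod_pos fun k _ => sum_partitionFn_pos hβ _
  have hZ : ∀ c, partitionFn q d (n + 1) β τ c = (∏ k, ∑ c, partitionFn q d n β (τsub k τ) c) *
      rootWeight β (fun k => condRootProb q d n β (τsub k τ)) c := by
    intro c
    rw [partitionFn_succ, rootWeight, ← prod_mul_distrib]
    refine prod_congr rfl fun k _ => ?_
    have hDk := sum_partitionFn_pos (β := β) hβ (τsub k τ)
    rw [sum_ite_mul_partitionFn, condRootProb_eq_div]
    field_simp
  funext c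
  simp only [condRootProb_eq_div, bpStep, hZ]
  rw [← mul_sum, mul_div_mul_left _ _ hD.ne']

lemma condRootProb_add_two_div (hβ : 0 < β) (hβ1 : β ≤ 1)
    (τ : (Fin (n + 2) → Fin d) → Fin q) (c₁ c₂ : Fin q) :
    condRootProb q d (n + 2) β τ c₁ / condRootProb q d (n + 2) β τ c₂ =
      ∏ j, hfun q d β c₁ c₂ fun k => condRootProb q d n β (τsub k (τsub j τ)) := by
  rw [condRootProb_succ hβ,
    bpStep_div_bpStep hβ hβ1 fun j => condRootProb_mem_stdSimplex hβ _]
  refine prod_congr rfl fun j _ => ?_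
  rw [condRootProb_succ hβ,
    hfun_eq_div_bpStep hβ hβ1 fun k => condRootProb_mem_stdSimplex hβ _]

lemma condRootProb_succ_pos (hβ : 0 < β) (hβ1 : β ≤ 1) (τ : (Fin (n + 1) → Fin d) → Fin q)
    (c : Fin q) : 0 < condRootProb q d (n + 1) β τ c := by
  rw [condRootProb_succ hβ]
  exact bpStep_pos hβ hβ1 (fun k => condRootProb_mem_stdSimplex hβ _) c

end Marginals

section Gamma

variable {q d n : ℕ} {β α : ℝ}

lemma simplexAlpha_subset_stdSimplex : simplexAlpha q α ⊆ stdSimplex ℝ (Fin q) :=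
  fun _ hp => ⟨hp.1, hp.2.1⟩

lemma div_le_pottsGamma (τ : (Fin n → Fin d) → Fin q) (c₁ c₂ : Fin q) :
    condRootProb q d n β τ c₁ / condRootProb q d n β τ c₂ ≤ pottsGamma q d β n :=
  le_ciSup_of_le (Set.finite_range _).bddAbove τ <|
    le_ciSup_of_le (Set.finite_range _).bddAbove c₁ <|
      le_ciSup (f := fun c => condRootProb q d n β τ c₁ / condRootProb q d n β τ c)
        (Set.finite_range _).bddAbove c₂

lemma pottsGamma_le [NeZero q] {y : ℝ}
    (h : ∀ τ c₁ c₂, condRootProb q d n β τ c₁ / condRootProb q d n β τ c₂ ≤ y) :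
    pottsGamma q d β n ≤ y :=
  ciSup_le fun τ => ciSup_le fun c₁ => ciSup_le fun c₂ => h τ c₁ c₂

lemma one_le_pottsGamma_succ [NeZero q] (hβ : 0 < β) (hβ1 : β ≤ 1) :
    1 ≤ pottsGamma q d β (n + 1) := by
  have h := div_le_pottsGamma (n := n + 1) (d := d) (β := β) (fun _ => (0 : Fin q)) 0 0
  rwa [div_self (condRootProb_succ_pos hβ hβ1 _ _).ne'] at h

lemma condRootProb_mem_simplexAlpha [NeZero q] (hβ : 0 < β) (hβ1 : β ≤ 1)
    (hγ : pottsGamma q d β (n + 1) ≤ α) (τ : (Fin (n + 1) → Fin d) → Fin q) :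
    condRootProb q d (n + 1) β τ ∈ simplexAlpha q α := by
  obtain ⟨h0, h1⟩ := condRootProb_mem_stdSimplex (n := n + 1) hβ τ
  refine ⟨h0, h1, fun i j => ?_⟩
  rw [← div_le_iff₀ (condRootProb_succ_pos hβ hβ1 τ j)]
  exact (div_le_pottsGamma τ i j).trans hγ

lemma pottsGamma_add_three_le [NeZero q] (hd : d ≠ 0) (hβ : 0 < β) (hβ1 : β ≤ 1) {y : ℝ}
    (hγ : pottsGamma q d β (n + 1) ≤ α)
    (hy : ∀ c₁ c₂ p, (∀ k, p k ∈ simplexAlpha q α) → hfun q d β c₁ c₂ p ^ d ≤ y) :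
    pottsGamma q d β (n + 3) ≤ y := by
  have : NeZero d := ⟨hd⟩
  refine pottsGamma_le fun τ c₁ c₂ => ?_
  rw [condRootProb_add_two_div hβ hβ1]
  have hp : ∀ j k, condRootProb q d (n + 1) β (τsub k (τsub j τ)) ∈ simplexAlpha q α :=
    fun j k => condRootProb_mem_simplexAlpha hβ hβ1 hγ _
  refine prod_le_of_forall_pow_card_le univ_nonempty (fun j _ => ?_) (fun j _ => ?_)
  · exact (hfun_mem_Icc hβ hβ1 (fun k => simplexAlpha_subset_stdSimplex (hp j k)) ..).1
  · simpa using hy c₁ c₂ _ (hp j)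

end Gamma

section Gap

variable {q d : ℕ} {β α : ℝ}

lemma isClosed_setOf_mem_simplexAlpha {X : Type*} [TopologicalSpace X] {f : X → ℝ}
    {g : X → Fin q → ℝ} (hf : Continuous f) (hg : Continuous g) :
    IsClosed {x | g x ∈ simplexAlpha q (f x)} := by
  change IsClosed {x | (∀ i, 0 ≤ g x i) ∧ ∑ i, g x i = 1 ∧ ∀ i j, g x i ≤ f x * g x j}
  simp only [Set.ofPred_and, Set.ofPred_forall]
  exact (isClosed_iInter fun i => isClosed_le continuous_const ((continuous_apply i).comp hg)).inter
    ((isClosed_eq (continuous_finsetSum _ fun i _ => (continuous_apply i).comp hg)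
      continuous_const).inter
      (isClosed_iInter fun i => isClosed_iInter fun j =>
        isClosed_le ((continuous_apply i).comp hg) (hf.mul ((continuous_apply j).comp hg))))

lemma isCompact_setOf_mem_simplexAlpha (a b : ℝ) :
    IsCompact {x : ℝ × (Fin d → Fin q → ℝ) |
      x.1 ∈ Set.Icc a b ∧ ∀ k, x.2 k ∈ simplexAlpha q x.1} := by
  refine (isCompact_Icc (a := (a, 0)) (b := (b, 1))).of_isClosed_subset ?_ ?_
  · simp only [Set.ofPred_and, Set.ofPred_forall]
    exact (isClosed_Icc.preimage continuous_fst).inter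
      (isClosed_iInter fun k => isClosed_setOf_mem_simplexAlpha continuous_fst (by fun_prop))
  · rintro x ⟨hx, hp⟩
    exact ⟨⟨hx.1, fun k i => (hp k).1 i⟩,
      ⟨hx.2, fun k i => (mem_Icc_of_mem_stdSimplex (simplexAlpha_subset_stdSimplex (hp k)) i).2⟩⟩

lemma continuousOn_gfun (hβ : 0 < β) (hβ1 : β ≤ 1) (c₁ c₂ : Fin q) :
    ContinuousOn (gfun q d β c₁ c₂) {p | ∀ k, p k ∈ stdSimplex ℝ (Fin q)} := by
  refine continuousOn_finsetProd _ fun k _ => continuousOn_const.sub (.div (by fun_prop)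
    (by fun_prop) fun p hp => ?_)
  rw [mul_add_sum_erase_eq (hp k)]
  exact (hβ.trans_le (le_one_sub_one_sub_mul hβ1 (mem_Icc_of_mem_stdSimplex (hp k) c₂).2)).ne'

lemma continuousOn_hfun (hβ : 0 < β) (hβ1 : β ≤ 1) (c₁ c₂ : Fin q) :
    ContinuousOn (hfun q d β c₁ c₂) {p | ∀ k, p k ∈ stdSimplex ℝ (Fin q)} := by
  refine continuousOn_const.add (.div (continuousOn_const.mul
    (continuousOn_const.sub (continuousOn_gfun hβ hβ1 c₁ c₂)))
    (continuousOn_const.add (continuousOn_finsetSum _ fun c _ => continuousOn_gfun hβ hβ1 c c₂))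
    fun p hp => ?_)
  have hg : ∀ c, 0 ≤ gfun q d β c c₂ p := fun c => by
    rw [gfun_eq_div_rootWeight hβ hβ1 hp]
    exact div_nonneg (rootWeight_pos hβ hβ1 hp c).le (rootWeight_pos hβ hβ1 hp c₂).le
  exact (add_pos_of_pos_of_nonneg hβ (sum_nonneg fun c _ => hg c)).ne'

lemma hfun_le_Mval (hβ : 0 < β) (hβ1 : β ≤ 1) (c₁ c₂ : Fin q) {p : Fin d → Fin q → ℝ}
    (hp : ∀ k, p k ∈ simplexAlpha q α) : hfun q d β c₁ c₂ p ≤ Mval q d α β c₁ c₂ :=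
  le_csSup ⟨β⁻¹, Set.forall_mem_image.2 fun _ hp' =>
      (hfun_mem_Icc hβ hβ1 (fun k => simplexAlpha_subset_stdSimplex (hp' k)) c₁ c₂).2⟩
    (Set.mem_image_of_mem _ hp)

lemma hfun_pow_lt (hd : d ≠ 0) (hβ : 0 < β) (hβ1 : β ≤ 1) (hα : 0 ≤ α) {c₁ c₂ : Fin q}
    (hM : Mval q d α β c₁ c₂ < α ^ (1 / (d : ℝ))) {p : Fin d → Fin q → ℝ}
    (hp : ∀ k, p k ∈ simplexAlpha q α) : hfun q d β c₁ c₂ p ^ d < α := by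
  calc hfun q d β c₁ c₂ p ^ d < (α ^ (1 / (d : ℝ))) ^ d :=
        pow_lt_pow_left₀ ((hfun_le_Mval hβ hβ1 c₁ c₂ hp).trans_lt hM)
          (hfun_mem_Icc hβ hβ1 (fun k => simplexAlpha_subset_stdSimplex (hp k)) c₁ c₂).1 hd
    _ = α := by rw [one_div, Real.rpow_inv_natCast_pow hα hd]

lemma exists_pos_forall_hfun_pow_le_sub [NeZero q] (hd : d ≠ 0) (hβ : 0 < β) (hβ1 : β ≤ 1)
    (hM : ∀ α : ℝ, 1 < α → ∀ c₁ c₂ : Fin q, Mval q d α β c₁ c₂ < α ^ (1 / (d : ℝ)))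
    {a b : ℝ} (ha : 1 < a) :
    ∃ δ > 0, ∀ α ∈ Set.Icc a b, ∀ c₁ c₂ p, (∀ k, p k ∈ simplexAlpha q α) →
      hfun q d β c₁ c₂ p ^ d ≤ α - δ := by
  have hpair : ∀ c : Fin q × Fin q, ∃ δ > 0, ∀ x ∈ {x : ℝ × (Fin d → Fin q → ℝ) |
      x.1 ∈ Set.Icc a b ∧ ∀ k, x.2 k ∈ simplexAlpha q x.1},
      δ ≤ x.1 - hfun q d β c.1 c.2 x.2 ^ d := by
    refine fun c => (isCompact_setOf_mem_simplexAlpha a b).exists_forall_le'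
      (continuous_fst.continuousOn.sub
        (((continuousOn_hfun hβ hβ1 c.1 c.2).comp continuous_snd.continuousOn
          fun x hx k => simplexAlpha_subset_stdSimplex (hx.2 k)).pow d)) fun x hx => ?_
    have hx1 : 1 < x.1 := ha.trans_le hx.1.1
    exact sub_pos.2 (hfun_pow_lt hd hβ hβ1 (by linarith) (hM _ hx1 c.1 c.2) hx.2)
  choose δ hδ0 hδ using hpair
  obtain ⟨c₀, hc₀⟩ := Finite.exists_min δ
  exact ⟨δ c₀, hδ0 c₀, fun α hα c₁ c₂ p hp => by
    linarith [hc₀ (c₁, c₂), hδ (c₁, c₂) (α, p) ⟨hα, hp⟩]⟩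

end Gap

section Limit

variable {q d : ℕ} {β : ℝ} [NeZero q]

lemma eventually_one_le_pottsGamma (hβ : 0 < β) (hβ1 : β ≤ 1) :
    ∀ᶠ n in atTop, 1 ≤ pottsGamma q d β n :=
  eventually_atTop.2 ⟨1, fun n hn => by
    obtain ⟨m, rfl⟩ := Nat.exists_eq_add_of_le' hn
    exact one_le_pottsGamma_succ hβ hβ1⟩

lemma eventually_pottsGamma_le (hd : d ≠ 0) (hβ : 0 < β) (hβ1 : β ≤ 1)
    (hM : ∀ α : ℝ, 1 < α → ∀ c₁ c₂ : Fin q, Mval q d α β c₁ c₂ < α ^ (1 / (d : ℝ)))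
    {ε : ℝ} (hε : 0 < ε) : ∀ᶠ n in atTop, pottsGamma q d β n ≤ 1 + ε := by
  obtain ⟨δ, hδ, hgap⟩ := exists_pos_forall_hfun_pow_le_sub (b := β⁻¹ ^ d) hd hβ hβ1 hM
    (lt_add_of_pos_right 1 hε)
  refine eventually_le_of_forall_eventually_le_sub (b := β⁻¹ ^ d) hδ ?bound fun α hα hγ => ?step
  case bound =>
    refine eventually_atTop.2 ⟨3, fun n hn => ?_⟩
    obtain ⟨m, rfl⟩ := Nat.exists_eq_add_of_le' hn
    refine pottsGamma_add_three_le hd hβ hβ1 le_rfl fun c₁ c₂ p hp => ?_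
    have h := hfun_mem_Icc hβ hβ1 (fun k => simplexAlpha_subset_stdSimplex (hp k)) c₁ c₂
    exact pow_le_pow_left₀ h.1 h.2 d
  case step =>
    obtain ⟨N, hN⟩ := eventually_atTop.1 hγ
    refine eventually_atTop.2 ⟨N + 3, fun n hn => ?_⟩
    obtain ⟨m, rfl⟩ := Nat.exists_eq_add_of_le' (le_of_add_le_right hn)
    exact pottsGamma_add_three_le hd hβ hβ1 (hN (m + 1) (by omega)) (hgap α hα)

end Limit

end Potts

/-- If for all `α > 1` and all colours `c₁, c₂ ∈ [q]` we have `M_{α,c₁,c₂,β} < α^{1/d}`,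
then `γ(q,β,d,n) → 1` as `n → ∞`. -/
theorem potts_gamma_tendsto_one_of_M_lt (q d : ℕ) (hq : 3 ≤ q) (hd : 2 ≤ d)
    (β : ℝ) (hβ0 : 0 < β) (hβ1 : β < 1)
    (hM : ∀ α : ℝ, 1 < α → ∀ c₁ c₂ : Fin q,
      Mval q d α β c₁ c₂ < α ^ (1 / (d : ℝ))) :
    Filter.Tendsto (pottsGamma q d β) Filter.atTop (nhds 1) := by
  have : NeZero q := ⟨by omega⟩
  refine tendsto_order.2 ⟨fun a ha => ?_, fun a ha => ?_⟩
  · exact (Potts.eventually_one_le_pottsGamma hβ0 hβ1.le).mono fun n hn => ha.trans_le hn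
  · obtain ⟨ε, hε, hεa⟩ : ∃ ε > 0, 1 + ε < a := ⟨(a - 1) / 2, by linarith, by linarith⟩
    exact (Potts.eventually_pottsGamma_le (by omega) hβ0 hβ1.le hM hε).mono
      fun n hn => hn.trans_lt hεa
end

section
/- Let q ≥ 3, d ≥ 2, β ∈ [0,1) and α > 1. For any colours c₁, c₂ ∈ [q], there is an (α,c₂)-extremal tuple (p^{(1)},…,p^{(d)}) ∈ Δ_α^d which achieves the maximum of h_{c₁,c₂,β}(p^{(1)},…,p^{(d)}) over Δ_α^d. -/
open Filter

/-!
Write `T u c = ∑ i, u i - (1 - β) * u c` (the Potts interaction matrix applied to `u`) and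
`W = ∏ k, T (p k)`. Then `h(p) = T W c₁ / T W c₂`, and with all coordinates but `p k` fixed both
terms are linear in `p k`, so `r ≤ h(p)` becomes a linear inequality `0 ≤ ∑ i, ℓ i * p k i`.
For `1 ≤ r ≤ 1 / β` the colour `c₂` carries the smallest coefficient of `ℓ`, and the vertex of
`Δ_α` with weight `α` on the positive coefficients of `ℓ` (or on every colour but `c₂`) still
satisfies the inequality. Replacing coordinates one at a time thus moves any `p` with
`1 ≤ h(p)` to an `(α, c₂)`-extremal tuple without decreasing `h`, while `h = 1` on the extremal
tuple whose entries are the vertex on a third colour `c₃`. Hence the best of the finitely many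
extremal tuples is a maximiser.
-/

open Finset Function

/-- Multiplication by the Potts interaction matrix, with `β` on the diagonal and `1` off it. -/
noncomputable def pottsTransfer {ι : Type*} [Fintype ι] (β : ℝ) (u : ι → ℝ) (c : ι) : ℝ :=
  ∑ i, u i - (1 - β) * u c

section PottsTransfer

variable {ι : Type*} [Fintype ι] {β : ℝ}

lemma pottsTransfer_eq_add_sum_erase [DecidableEq ι] (u : ι → ℝ) (c : ι) :
    pottsTransfer β u c = β * u c + ∑ i ∈ univ.erase c, u i := by
  rw [pottsTransfer, ← add_sum_erase univ u (mem_univ c)]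
  ring

lemma pottsTransfer_sub_pottsTransfer (u : ι → ℝ) (i j : ι) :
    pottsTransfer β u i - pottsTransfer β u j = (1 - β) * (u j - u i) := by
  simp only [pottsTransfer]
  ring

lemma sum_mul_pottsTransfer (e u : ι → ℝ) :
    ∑ c, e c * pottsTransfer β u c = ∑ c, pottsTransfer β e c * u c := by
  simp only [pottsTransfer, mul_sub, sub_mul, sum_sub_distrib, ← sum_mul, ← mul_sum]
  simp only [mul_left_comm, mul_comm]

lemma pottsTransfer_pos [Nontrivial ι] (hβ : 0 ≤ β) {u : ι → ℝ} (hu : ∀ i, 0 < u i) (c : ι) :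
    0 < pottsTransfer β u c := by
  classical
  obtain ⟨j, hj⟩ := exists_ne c
  have hrest : 0 < ∑ i ∈ univ.erase c, u i :=
    sum_pos (fun i _ => hu i) ⟨j, mem_erase.2 ⟨hj, mem_univ j⟩⟩
  rw [pottsTransfer_eq_add_sum_erase]
  have := hu c
  positivity

lemma mul_pottsTransfer_le (hβ0 : 0 ≤ β) (hβ1 : β ≤ 1) {u : ι → ℝ} (hu : ∀ i, 0 ≤ u i)
    (c c' : ι) : β * pottsTransfer β u c ≤ pottsTransfer β u c' := by
  have hc' : u c' ≤ ∑ i, u i := single_le_sum (fun i _ => hu i) (mem_univ c')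
  have hdiff : pottsTransfer β u c' - β * pottsTransfer β u c
      = (1 - β) * (∑ i, u i - u c' + β * u c) := by
    simp only [pottsTransfer]
    ring
  rw [← sub_nonneg, hdiff]
  exact mul_nonneg (sub_nonneg.2 hβ1) (add_nonneg (sub_nonneg.2 hc') (mul_nonneg hβ0 (hu c)))

end PottsTransfer

section Recursion

variable {q d : ℕ} {β : ℝ}

lemma gfun_eq_div (c c₂ : Fin q) {p : Fin d → Fin q → ℝ}
    (hp : ∀ k, pottsTransfer β (p k) c₂ ≠ 0) :
    gfun q d β c c₂ p
      = (∏ k, pottsTransfer β (p k)) c / (∏ k, pottsTransfer β (p k)) c₂ := by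
  rw [gfun, Finset.prod_apply, Finset.prod_apply, ← prod_div_distrib]
  refine prod_congr rfl fun k _ => ?_
  rw [← pottsTransfer_eq_add_sum_erase, eq_div_iff (hp k), sub_mul, one_mul,
    div_mul_cancel₀ _ (hp k)]
  linarith [pottsTransfer_sub_pottsTransfer (β := β) (p k) c c₂]

lemma hfun_eq_one (c₁ c₂ : Fin q) {p : Fin d → Fin q → ℝ} (hp : ∀ k, p k c₁ = p k c₂) :
    hfun q d β c₁ c₂ p = 1 := by
  simp [hfun, gfun, hp]

lemma hfun_eq_div [Nontrivial (Fin q)] (hβ : 0 ≤ β) (c₁ c₂ : Fin q)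
    {p : Fin d → Fin q → ℝ} (hp : ∀ k i, 0 < p k i) :
    hfun q d β c₁ c₂ p
      = pottsTransfer β (∏ k, pottsTransfer β (p k)) c₁
          / pottsTransfer β (∏ k, pottsTransfer β (p k)) c₂ := by
  have hT : ∀ k c, 0 < pottsTransfer β (p k) c := fun k => pottsTransfer_pos hβ (hp k)
  simp only [hfun, gfun_eq_div _ c₂ fun k => (hT k c₂).ne']
  set W := ∏ k, pottsTransfer β (p k)
  have hW : ∀ c, 0 < W c := fun c => by
    simpa only [W, Finset.prod_apply] using prod_pos fun k _ => hT k c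
  have hW₂ := (hW c₂).ne'
  have hTW₂ := (pottsTransfer_pos hβ hW c₂).ne'
  rw [← sum_div, add_div' _ _ _ hW₂, ← pottsTransfer_eq_add_sum_erase]
  field_simp
  linear_combination -pottsTransfer_sub_pottsTransfer (β := β) W c₁ c₂

end Recursion

section AlphaSimplex

variable {q : ℕ} {α : ℝ}

lemma pos_of_mem_simplexAlpha {v : Fin q → ℝ} (hv : v ∈ simplexAlpha q α) (i : Fin q) :
    0 < v i := by
  obtain ⟨hv0, hv1, hvα⟩ := hv
  refine (hv0 i).lt_of_ne' fun hi => ?_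
  have hzero : ∀ j, v j = 0 := fun j => le_antisymm (by simpa [hi] using hvα j i) (hv0 j)
  simp [hzero] at hv1

noncomputable def alphaVertex (q : ℕ) (α : ℝ) (S : Finset (Fin q)) : Fin q → ℝ :=
  fun c => (if c ∈ S then α else 1) / ∑ c', if c' ∈ S then α else 1

lemma alphaVertex_mem [Nonempty (Fin q)] (hα : 1 ≤ α) (S : Finset (Fin q)) :
    alphaVertex q α S ∈ simplexAlpha q α := by
  have hy : ∀ c, 0 < if c ∈ S then α else 1 := fun c => by split_ifs <;> linarith
  have hσ : 0 < ∑ c, if c ∈ S then α else 1 := sum_pos (fun c _ => hy c) univ_nonempty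
  refine ⟨fun c => (div_pos (hy c) hσ).le, by simp only [alphaVertex, ← sum_div, div_self hσ.ne'],
    fun i j => ?_⟩
  simp only [alphaVertex, ← mul_div_assoc]
  gcongr
  split_ifs <;> nlinarith

lemma alphaVertex_extremal {S : Finset (Fin q)} {c₂ : Fin q} (hS : S.Nonempty) (hc₂ : c₂ ∉ S) :
    (∀ c, alphaVertex q α S c = alphaVertex q α S c₂ ∨
        alphaVertex q α S c = α * alphaVertex q α S c₂) ∧
      ∃ c, alphaVertex q α S c = α * alphaVertex q α S c₂ := by
  have hS' : ∀ c ∈ S, alphaVertex q α S c = α * alphaVertex q α S c₂ := fun c hc => by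
    simp [alphaVertex, hc, hc₂, div_eq_mul_inv]
  refine ⟨fun c => ?_, hS.imp hS'⟩
  by_cases hc : c ∈ S
  · exact .inr (hS' c hc)
  · simp [alphaVertex, hc, hc₂]

lemma sum_mul_le_min_mul {ℓ v : Fin q → ℝ} (hv : v ∈ simplexAlpha q α) {j : Fin q}
    (hj : ∀ i, v j ≤ v i) :
    ∑ i, ℓ i * v i ≤ v j * ∑ i, ℓ i * if 0 < ℓ i then α else 1 := by
  rw [mul_sum]
  refine sum_le_sum fun i _ => ?_
  split_ifs with hℓ
  · nlinarith [hv.2.2 i j]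
  · nlinarith [hj i]

lemma exists_alphaVertex_sum_mul_nonneg [Nontrivial (Fin q)] (hα : 0 ≤ α) {ℓ v : Fin q → ℝ}
    {c₂ : Fin q} (hℓ : ∀ c, ℓ c₂ ≤ ℓ c) (hv : v ∈ simplexAlpha q α)
    (h : 0 ≤ ∑ i, ℓ i * v i) :
    ∃ S : Finset (Fin q), S.Nonempty ∧ c₂ ∉ S ∧ 0 ≤ ∑ i, ℓ i * alphaVertex q α S i := by
  suffices ∃ S : Finset (Fin q), S.Nonempty ∧ c₂ ∉ S ∧
      0 ≤ ∑ i, ℓ i * if i ∈ S then α else 1 by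
    obtain ⟨S, hS, hc₂, hℓS⟩ := this
    refine ⟨S, hS, hc₂, ?_⟩
    simp only [alphaVertex, mul_div_assoc', ← sum_div]
    exact div_nonneg hℓS (sum_nonneg fun c _ => by split_ifs <;> linarith)
  rcases le_or_gt 0 (ℓ c₂) with hℓ₂ | hℓ₂
  · obtain ⟨c, hc⟩ := exists_ne c₂
    refine ⟨univ.erase c₂, ⟨c, mem_erase.2 ⟨hc, mem_univ c⟩⟩, notMem_erase c₂ univ,
      sum_nonneg fun i _ => ?_⟩
    split_ifs <;> nlinarith [hℓ i]
  · obtain ⟨j, hj⟩ := Finite.exists_min v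
    have hbound := sum_mul_le_min_mul (ℓ := ℓ) hv hj
    have hpos : 0 ≤ ∑ i, ℓ i * if 0 < ℓ i then α else 1 :=
      (mul_nonneg_iff_of_pos_left (pos_of_mem_simplexAlpha hv j)).1 (h.trans hbound)
    refine ⟨univ.filter (0 < ℓ ·), ?_, by simpa using hℓ₂.le, by simpa using hpos⟩
    by_contra hempty
    have hneg : ∀ i, ℓ i ≤ 0 := by simpa [filter_eq_empty_iff] using hempty
    have hsum : ∑ i, ℓ i < ∑ _i : Fin q, (0 : ℝ) :=
      sum_lt_sum (fun i _ => hneg i) ⟨c₂, mem_univ _, hℓ₂⟩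
    simp [fun i => (hneg i).not_gt] at hpos hsum
    linarith

end AlphaSimplex

section Improvement

variable {q d : ℕ} {α β : ℝ}

lemma exists_alphaVertex_ratio_ge [Nontrivial (Fin q)] (hα : 0 ≤ α) (hβ : β ≤ 1)
    {c₁ c₂ : Fin q} (hc : c₁ ≠ c₂) {A : Fin q → ℝ} (hA : ∀ c, 0 ≤ A c) {r : ℝ} (hr : 1 ≤ r)
    (hβr : β * r ≤ 1) {v : Fin q → ℝ} (hv : v ∈ simplexAlpha q α)
    (hrv : r * pottsTransfer β (A * pottsTransfer β v) c₂
      ≤ pottsTransfer β (A * pottsTransfer β v) c₁) :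
    ∃ S : Finset (Fin q), S.Nonempty ∧ c₂ ∉ S ∧
      r * pottsTransfer β (A * pottsTransfer β (alphaVertex q α S)) c₂
        ≤ pottsTransfer β (A * pottsTransfer β (alphaVertex q α S)) c₁ := by
  set e : Fin q → ℝ := fun c => (if c = c₁ then 1 else 0) - r * if c = c₂ then 1 else 0
  set ℓ := pottsTransfer β (pottsTransfer β e * A)
  have hform : ∀ u, pottsTransfer β (A * pottsTransfer β u) c₁
      - r * pottsTransfer β (A * pottsTransfer β u) c₂ = ∑ i, ℓ i * u i := by
    intro u
    have he : ∑ c, e c * pottsTransfer β (A * pottsTransfer β u) c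
        = pottsTransfer β (A * pottsTransfer β u) c₁
          - r * pottsTransfer β (A * pottsTransfer β u) c₂ := by
      simp [e, sub_mul, sum_sub_distrib]
    rw [← he, sum_mul_pottsTransfer]
    simp only [Pi.mul_apply, ← mul_assoc]
    exact sum_mul_pottsTransfer (β := β) (pottsTransfer β e * A) u
  have hsum_e : ∑ c, e c = 1 - r := by simp [e, sum_sub_distrib]
  -- `T e c = 1 - r - (1 - β) * e c` is `≤ 0` for `c ≠ c₂` since `1 ≤ r`, and `T e c₂ = 1 - β * r`.
  have hb : ∀ c, (pottsTransfer β e * A) c ≤ (pottsTransfer β e * A) c₂ := by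
    intro c
    have he₂ : 0 ≤ pottsTransfer β e c₂ := by
      simp only [pottsTransfer, hsum_e, e, if_neg hc.symm, if_true]
      nlinarith
    rcases eq_or_ne c c₂ with rfl | hc₂
    · rfl
    have he : pottsTransfer β e c ≤ 0 := by
      simp only [pottsTransfer, hsum_e, e, if_neg hc₂]
      split_ifs <;> nlinarith
    simp only [Pi.mul_apply]
    nlinarith [hA c, hA c₂]
  have hℓ : ∀ c, ℓ c₂ ≤ ℓ c := fun c => by
    have := pottsTransfer_sub_pottsTransfer (β := β) (pottsTransfer β e * A) c c₂
    nlinarith [hb c]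
  obtain ⟨S, hS, hc₂S, hSℓ⟩ :=
    exists_alphaVertex_sum_mul_nonneg hα hℓ hv (by rw [← hform]; linarith)
  exact ⟨S, hS, hc₂S, by linarith [hform (alphaVertex q α S)]⟩

lemma exists_hfun_le_update_alphaVertex [Nontrivial (Fin q)] (hα : 1 ≤ α) (hβ0 : 0 ≤ β)
    (hβ1 : β ≤ 1) {c₁ c₂ : Fin q} (hc : c₁ ≠ c₂) {p : Fin d → Fin q → ℝ}
    (hp : ∀ k, p k ∈ simplexAlpha q α) (h1 : 1 ≤ hfun q d β c₁ c₂ p) (k : Fin d) :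
    ∃ S : Finset (Fin q), S.Nonempty ∧ c₂ ∉ S ∧
      hfun q d β c₁ c₂ p ≤ hfun q d β c₁ c₂ (update p k (alphaVertex q α S)) := by
  set A := ∏ k' ∈ univ.erase k, pottsTransfer β (p k')
  have hTpos : ∀ v ∈ simplexAlpha q α, ∀ c, 0 < pottsTransfer β v c := fun v hv =>
    pottsTransfer_pos hβ0 (pos_of_mem_simplexAlpha hv)
  have hA : ∀ c, 0 < A c := fun c => by
    simpa only [A, Finset.prod_apply] using prod_pos fun k' _ => hTpos _ (hp k') c
  have hApos : ∀ v ∈ simplexAlpha q α, ∀ c, 0 < (A * pottsTransfer β v) c := fun v hv c =>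
    mul_pos (hA c) (hTpos v hv c)
  have hupdate : ∀ v ∈ simplexAlpha q α, hfun q d β c₁ c₂ (update p k v)
      = pottsTransfer β (A * pottsTransfer β v) c₁
        / pottsTransfer β (A * pottsTransfer β v) c₂ := by
    intro v hv
    have hmem : ∀ k', update p k v k' ∈ simplexAlpha q α := fun k' => by
      rcases eq_or_ne k' k with rfl | hk'
      · simpa using hv
      · simpa [hk'] using hp k'
    rw [hfun_eq_div hβ0 c₁ c₂ fun k' => pos_of_mem_simplexAlpha (hmem k'),
      ← mul_prod_erase univ _ (mem_univ k), update_self, mul_comm,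
      prod_congr rfl fun k' hk' => by rw [update_of_ne (ne_of_mem_erase hk')]]
  have hr : hfun q d β c₁ c₂ p
      = pottsTransfer β (A * pottsTransfer β (p k)) c₁
        / pottsTransfer β (A * pottsTransfer β (p k)) c₂ := by
    simpa using hupdate (p k) (hp k)
  have hden : ∀ v ∈ simplexAlpha q α, 0 < pottsTransfer β (A * pottsTransfer β v) c₂ :=
    fun v hv => pottsTransfer_pos hβ0 (hApos v hv) c₂
  have hβr : β * hfun q d β c₁ c₂ p ≤ 1 := by
    rw [hr, ← mul_div_assoc, div_le_one (hden _ (hp k))]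
    exact mul_pottsTransfer_le hβ0 hβ1 (fun c => (hApos _ (hp k) c).le) c₁ c₂
  obtain ⟨S, hS, hc₂S, hSr⟩ := exists_alphaVertex_ratio_ge (zero_le_one.trans hα) hβ1 hc
    (fun c => (hA c).le) h1 hβr
    (hp k) (by rw [hr, div_mul_cancel₀ _ (hden _ (hp k)).ne'])
  refine ⟨S, hS, hc₂S, ?_⟩
  rw [hupdate _ (alphaVertex_mem hα S), le_div_iff₀ (hden _ (alphaVertex_mem hα S))]
  exact hSr

lemma exists_alphaVertex_tuple_hfun_ge [Nontrivial (Fin q)] (hα : 1 ≤ α) (hβ0 : 0 ≤ β)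
    (hβ1 : β ≤ 1) {c₁ c₂ : Fin q} (hc : c₁ ≠ c₂) {p : Fin d → Fin q → ℝ}
    (hp : ∀ k, p k ∈ simplexAlpha q α) (h1 : 1 ≤ hfun q d β c₁ c₂ p) :
    ∃ f : Fin d → Finset (Fin q), (∀ k, (f k).Nonempty ∧ c₂ ∉ f k) ∧
      hfun q d β c₁ c₂ p ≤ hfun q d β c₁ c₂ fun k => alphaVertex q α (f k) := by
  classical
  suffices ∀ T : Finset (Fin d), ∃ f : Fin d → Finset (Fin q),
      (∀ k ∈ T, (f k).Nonempty ∧ c₂ ∉ f k) ∧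
        hfun q d β c₁ c₂ p
          ≤ hfun q d β c₁ c₂ fun k => if k ∈ T then alphaVertex q α (f k) else p k by
    simpa using this univ
  intro T
  induction T using Finset.induction_on with
  | empty => exact ⟨fun _ => ∅, by simp, by simp⟩
  | @insert k T hk ih =>
    obtain ⟨f, hf, hle⟩ := ih
    set p' := fun k => if k ∈ T then alphaVertex q α (f k) else p k
    have hp' : ∀ k, p' k ∈ simplexAlpha q α := fun k => by
      by_cases hkT : k ∈ T <;> simp [p', hkT, alphaVertex_mem hα, hp k]
    obtain ⟨S, hS, hc₂S, hle'⟩ :=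
      exists_hfun_le_update_alphaVertex hα hβ0 hβ1 hc hp' (h1.trans hle) k
    refine ⟨update f k S, fun k' hk' => ?_, hle.trans (hle'.trans_eq ?_)⟩
    · rcases eq_or_ne k' k with rfl | hne
      · simpa using ⟨hS, hc₂S⟩
      · simpa [hne] using hf k' (by simpa [hne] using hk')
    · congr 1
      funext k'
      rcases eq_or_ne k' k with rfl | hne
      · simp
      · simp [hne, p']

end Improvement

theorem exists_extremal_maximiser_general (q d : ℕ) (hq : 3 ≤ q)
    (β : ℝ) (hβ0 : 0 ≤ β) (hβ1 : β < 1) (α : ℝ) (hα : 1 < α) (c₁ c₂ : Fin q) :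
    ∃ p : Fin d → Fin q → ℝ,
      (∀ k, p k ∈ simplexAlpha q α) ∧
      (∀ k : Fin d,
        (∀ c' : Fin q, p k c' = p k c₂ ∨ p k c' = α * p k c₂) ∧
        (∃ c' : Fin q, p k c' = α * p k c₂)) ∧
      (∀ p' : Fin d → Fin q → ℝ, (∀ k, p' k ∈ simplexAlpha q α) →
        hfun q d β c₁ c₂ p' ≤ hfun q d β c₁ c₂ p) := by
  classical
  have : Nontrivial (Fin q) := Fin.nontrivial_iff_two_le.2 (by omega)
  obtain ⟨c₃, -, hc₃⟩ := exists_mem_notMem_of_card_lt_card (s := {c₁, c₂}) (t := univ)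
    (card_le_two.trans_lt (by simp; omega))
  have hc₃₁ : c₁ ≠ c₃ := fun h => hc₃ (by simp [h])
  have hc₃₂ : c₂ ≠ c₃ := fun h => hc₃ (by simp [h])
  set F := univ.filter fun f : Fin d → Finset (Fin q) => ∀ k, (f k).Nonempty ∧ c₂ ∉ f k
  have hF₃ : (fun _ => {c₃}) ∈ F := by simp [F, hc₃₂]
  obtain ⟨f, hfF, hfmax⟩ := F.exists_max_image
    (fun f => hfun q d β c₁ c₂ fun k => alphaVertex q α (f k)) ⟨_, hF₃⟩
  have hf := (mem_filter.1 hfF).2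
  refine ⟨fun k => alphaVertex q α (f k), fun k => alphaVertex_mem hα.le _,
    fun k => alphaVertex_extremal (hf k).1 (hf k).2, fun p hp => ?_⟩
  rcases le_or_gt (hfun q d β c₁ c₂ p) 1 with hp1 | hp1
  · calc hfun q d β c₁ c₂ p ≤ 1 := hp1
      _ = hfun q d β c₁ c₂ fun _ => alphaVertex q α {c₃} :=
        (hfun_eq_one c₁ c₂ fun _ => by simp [alphaVertex, hc₃₁, hc₃₂]).symm
      _ ≤ _ := hfmax _ hF₃
  · have hc : c₁ ≠ c₂ := by
      rintro rfl
      simp [hfun_eq_one] at hp1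
    obtain ⟨g, hg, hle⟩ := exists_alphaVertex_tuple_hfun_ge hα.le hβ0 hβ1.le hc hp hp1.le
    exact hle.trans (hfmax g (by simpa [F] using hg))

/-- For any colours `c₁, c₂ ∈ [q]`, there is an `(α,c₂)`-extremal tuple in `Δ_α^d`
achieving the maximum of `h_{c₁,c₂,β}` over `Δ_α^d`. -/
theorem exists_extremal_maximiser (q d : ℕ) (hq : 3 ≤ q) (hd : 2 ≤ d)
    (β : ℝ) (hβ0 : 0 ≤ β) (hβ1 : β < 1) (α : ℝ) (hα : 1 < α) (c₁ c₂ : Fin q) :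
    ∃ p : Fin d → Fin q → ℝ,
      (∀ k, p k ∈ simplexAlpha q α) ∧
      (∀ k : Fin d,
        (∀ c' : Fin q, p k c' = p k c₂ ∨ p k c' = α * p k c₂) ∧
        (∃ c' : Fin q, p k c' = α * p k c₂)) ∧
      (∀ p' : Fin d → Fin q → ℝ, (∀ k, p' k ∈ simplexAlpha q α) →
        hfun q d β c₁ c₂ p' ≤ hfun q d β c₁ c₂ p) :=
  exists_extremal_maximiser_general q d hq β hβ0 hβ1 α hα c₁ c₂
end

section
/- Let q ≥ 3, d ≥ 2 and β', β'' ∈ [0,1) with β' ≤ β''. Then for all α > 1 and all colours c₁, c₂ ∈ [q], M_{α,c₁,c₂,β''} ≤ M_{α,c₁,c₂,β'}. -/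
open Filter

namespace PottsAux

/-- `A_c = ∏ₖ (1 - t pᵏ_c)`. -/
noncomputable def Aprod (q d : ℕ) (t : ℝ) (p : Fin d → Fin q → ℝ) (c : Fin q) : ℝ :=
  ∏ k : Fin d, (1 - t * p k c)

lemma sa_pos {q : ℕ} {α : ℝ} {p : Fin q → ℝ}
    (hp : p ∈ simplexAlpha q α) (c : Fin q) : 0 < p c := by
  obtain ⟨h0, hsum, hratio⟩ := hp
  rcases lt_or_eq_of_le (h0 c) with h | h
  · exact h
  · exfalso
    have hall : ∀ i, p i = 0 := by
      intro i
      have := hratio i c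
      rw [← h] at this
      simp at this
      exact le_antisymm (by linarith) (h0 i)
    rw [Finset.sum_eq_zero (fun i _ => hall i)] at hsum
    norm_num at hsum

lemma sa_lt_one {q : ℕ} {α : ℝ} (hq : 3 ≤ q) {p : Fin q → ℝ}
    (hp : p ∈ simplexAlpha q α) (c : Fin q) : p c < 1 := by
  haveI : Nontrivial (Fin q) := Fin.nontrivial_iff_two_le.mpr (by omega)
  obtain ⟨c', hc'⟩ := exists_ne c
  obtain ⟨h0, hsum, -⟩ := id hp
  have hsub : ({c, c'} : Finset (Fin q)).sum p ≤ Finset.univ.sum p :=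
    Finset.sum_le_sum_of_subset_of_nonneg (Finset.subset_univ _)
      (fun i _ _ => h0 i)
  rw [Finset.sum_pair (Ne.symm hc'), hsum] at hsub
  have := sa_pos hp c'
  linarith

/-- `(q-1) ≤ (α + q - 1) (1 - p c)` for `p ∈ Δ_α`. -/
lemma sa_ub {q : ℕ} {α : ℝ} (hq : 3 ≤ q) (hα : 1 < α) {p : Fin q → ℝ}
    (hp : p ∈ simplexAlpha q α) (c : Fin q) :
    ((q : ℝ) - 1) ≤ (α + q - 1) * (1 - p c) := by
  obtain ⟨h0, hsum, hratio⟩ := id hp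
  have hα0 : (0:ℝ) < α := by linarith
  have hlow : ∀ j ∈ Finset.univ.erase c, p c / α ≤ p j := by
    intro j _
    rw [div_le_iff₀ hα0]
    calc p c ≤ α * p j := hratio c j
    _ = p j * α := by ring
  have hsumlow : ((Finset.univ.erase c).card : ℝ) * (p c / α)
      ≤ ∑ j ∈ Finset.univ.erase c, p j := by
    calc ((Finset.univ.erase c).card : ℝ) * (p c / α)
        = ∑ _j ∈ Finset.univ.erase c, (p c / α) := by
          rw [Finset.sum_const, nsmul_eq_mul]
    _ ≤ _ := Finset.sum_le_sum hlow
  have hcard : ((Finset.univ.erase c).card : ℝ) = (q : ℝ) - 1 := by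
    rw [Finset.card_erase_of_mem (Finset.mem_univ c), Finset.card_univ,
      Fintype.card_fin]
    have : 1 ≤ q := by omega
    push_cast [Nat.cast_sub this]
    ring
  have hesum : ∑ j ∈ Finset.univ.erase c, p j = 1 - p c := by
    rw [Finset.sum_erase_eq_sub (Finset.mem_univ c), hsum]
  rw [hcard, hesum] at hsumlow
  have hkey : ((q:ℝ) - 1) * p c ≤ α * (1 - p c) := by
    have h2 := mul_le_mul_of_nonneg_left hsumlow hα0.le
    rw [mul_comm α (((q:ℝ)-1) * (p c / α)), mul_assoc,
      div_mul_cancel₀ _ (ne_of_gt hα0)] at h2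
    linarith [h2]
  have hle1 : p c < 1 := sa_lt_one hq hp c
  have hq3 : (3:ℝ) ≤ (q:ℝ) := by exact_mod_cast hq
  nlinarith [hkey, hle1, sa_pos hp c]


section Main

variable {q d : ℕ} {α β t : ℝ} {p : Fin d → Fin q → ℝ}

lemma factor_pos (hq : 3 ≤ q) (ht0 : 0 ≤ t) (ht1 : t ≤ 1)
    (hp : ∀ k, p k ∈ simplexAlpha q α) (k : Fin d) (c : Fin q) :
    0 < 1 - t * p k c := by
  have h1 : p k c < 1 := sa_lt_one hq (hp k) c
  have h0 : 0 < p k c := sa_pos (hp k) c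
  nlinarith

lemma Aprod_pos (hq : 3 ≤ q) (ht0 : 0 ≤ t) (ht1 : t ≤ 1)
    (hp : ∀ k, p k ∈ simplexAlpha q α) (c : Fin q) :
    0 < Aprod q d t p c :=
  Finset.prod_pos (fun k _ => factor_pos hq ht0 ht1 hp k c)

lemma Aprod_le_one (hq : 3 ≤ q) (ht0 : 0 ≤ t) (ht1 : t ≤ 1)
    (hp : ∀ k, p k ∈ simplexAlpha q α) (c : Fin q) :
    Aprod q d t p c ≤ 1 := by
  apply Finset.prod_le_one
  · exact fun k _ => (factor_pos hq ht0 ht1 hp k c).le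
  · intro k _
    have := sa_pos (hp k) c
    nlinarith

lemma Aprod_ge (hq : 3 ≤ q) (hα : 1 < α) (ht0 : 0 ≤ t) (ht1 : t ≤ 1)
    (hp : ∀ k, p k ∈ simplexAlpha q α) (c : Fin q) :
    (((q:ℝ) - 1) / (α + q - 1)) ^ d ≤ Aprod q d t p c := by
  have hq3 : (3:ℝ) ≤ (q:ℝ) := by exact_mod_cast hq
  have hden : (0:ℝ) < α + q - 1 := by linarith
  have hnum : (0:ℝ) < (q:ℝ) - 1 := by linarith
  calc (((q:ℝ) - 1) / (α + q - 1)) ^ d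
      = ∏ _k : Fin d, (((q:ℝ) - 1) / (α + q - 1)) := by
        rw [Finset.prod_const, Finset.card_univ, Fintype.card_fin]
  _ ≤ Aprod q d t p c := by
      apply Finset.prod_le_prod
      · exact fun k _ => (div_pos hnum hden).le
      · intro k _
        have hub := sa_ub hq hα (hp k) c
        have h0 := sa_pos (hp k) c
        rw [div_le_iff₀ hden]
        nlinarith

/-- The denominator `S - s A_c` is positive, indeed at least the erased sum. -/
lemma S_sub_pos (hq : 3 ≤ q) (ht0 : 0 ≤ t) (ht1 : t ≤ 1)
    (hp : ∀ k, p k ∈ simplexAlpha q α) {s : ℝ} (hs : s ≤ 1) (c : Fin q) :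
    (∑ c' ∈ Finset.univ.erase c, Aprod q d t p c') ≤
      (∑ c', Aprod q d t p c') - s * Aprod q d t p c ∧
    0 < (∑ c', Aprod q d t p c') - s * Aprod q d t p c := by
  have hA : 0 < Aprod q d t p c := Aprod_pos hq ht0 ht1 hp c
  have hsum : ∑ c' ∈ Finset.univ.erase c, Aprod q d t p c'
      = (∑ c', Aprod q d t p c') - Aprod q d t p c :=
    Finset.sum_erase_eq_sub (Finset.mem_univ c)
  haveI : Nontrivial (Fin q) := Fin.nontrivial_iff_two_le.mpr (by omega)
  obtain ⟨c', hc'⟩ := exists_ne c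
  have hpos : 0 < ∑ c' ∈ Finset.univ.erase c, Aprod q d t p c' :=
    Finset.sum_pos (fun i _ => Aprod_pos hq ht0 ht1 hp i)
      ⟨c', Finset.mem_erase.mpr ⟨hc', Finset.mem_univ c'⟩⟩
  constructor
  · rw [hsum]
    nlinarith
  · rw [hsum] at hpos
    nlinarith

lemma gfun_eq (hq : 3 ≤ q) (h0 : 0 ≤ β) (h1 : β ≤ 1)
    (hp : ∀ k, p k ∈ simplexAlpha q α) (c₁ c₂ : Fin q) :
    gfun q d β c₁ c₂ p = Aprod q d (1-β) p c₁ / Aprod q d (1-β) p c₂ := by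
  rw [gfun, Aprod, Aprod, ← Finset.prod_div_distrib]
  apply Finset.prod_congr rfl
  intro k _
  have hsume : ∑ c ∈ Finset.univ.erase c₂, p k c = 1 - p k c₂ := by
    rw [Finset.sum_erase_eq_sub (Finset.mem_univ c₂), (hp k).2.1]
  rw [hsume]
  have hden : β * p k c₂ + (1 - p k c₂) = 1 - (1-β) * p k c₂ := by ring
  rw [hden]
  have hdpos : 0 < 1 - (1-β) * p k c₂ := factor_pos hq (by linarith) (by linarith) hp k c₂
  field_simp
  ring

lemma hfun_eq (hq : 3 ≤ q) (h0 : 0 ≤ β) (h1 : β ≤ 1)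
    (hp : ∀ k, p k ∈ simplexAlpha q α) (c₁ c₂ : Fin q) :
    hfun q d β c₁ c₂ p =
      ((∑ c, Aprod q d (1-β) p c) - (1-β) * Aprod q d (1-β) p c₁) /
      ((∑ c, Aprod q d (1-β) p c) - (1-β) * Aprod q d (1-β) p c₂) := by
  have ht0 : (0:ℝ) ≤ 1 - β := by linarith
  have ht1 : (1:ℝ) - β ≤ 1 := by linarith
  have hA2 : 0 < Aprod q d (1-β) p c₂ := Aprod_pos hq ht0 ht1 hp c₂
  have hT := (S_sub_pos hq ht0 ht1 hp ht1 c₂).2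
  rw [hfun]
  have hsg : ∑ c ∈ Finset.univ.erase c₂, gfun q d β c c₂ p
      = ((∑ c, Aprod q d (1-β) p c) - Aprod q d (1-β) p c₂) / Aprod q d (1-β) p c₂ := by
    rw [Finset.sum_congr rfl (fun c _ => gfun_eq hq h0 h1 hp c c₂), ← Finset.sum_div,
      Finset.sum_erase_eq_sub (Finset.mem_univ c₂)]
  rw [hsg, gfun_eq hq h0 h1 hp c₁ c₂]
  have hden : β + ((∑ c, Aprod q d (1-β) p c) - Aprod q d (1-β) p c₂) / Aprod q d (1-β) p c₂
      = ((∑ c, Aprod q d (1-β) p c) - (1-β) * Aprod q d (1-β) p c₂) / Aprod q d (1-β) p c₂ := by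
    field_simp
    ring
  rw [hden]
  rw [div_div_eq_mul_div]
  field_simp
  ring

lemma hfun_le (hq : 3 ≤ q) (hα : 1 < α) (h0 : 0 ≤ β) (h1 : β ≤ 1)
    (hp : ∀ k, p k ∈ simplexAlpha q α) (c₁ c₂ : Fin q) :
    hfun q d β c₁ c₂ p ≤ (q : ℝ) / (((q:ℝ) - 1) / (α + q - 1)) ^ d := by
  have ht0 : (0:ℝ) ≤ 1 - β := by linarith
  have ht1 : (1:ℝ) - β ≤ 1 := by linarith
  have hq3 : (3:ℝ) ≤ (q:ℝ) := by exact_mod_cast hq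
  rw [hfun_eq hq h0 h1 hp c₁ c₂]
  have hnum : (∑ c, Aprod q d (1-β) p c) - (1-β) * Aprod q d (1-β) p c₁ ≤ (q:ℝ) := by
    have hS : (∑ c, Aprod q d (1-β) p c) ≤ (q:ℝ) := by
      calc (∑ c, Aprod q d (1-β) p c) ≤ ∑ _c : Fin q, (1:ℝ) :=
        Finset.sum_le_sum (fun c _ => Aprod_le_one hq ht0 ht1 hp c)
      _ = (q:ℝ) := by simp
    have := Aprod_pos hq ht0 ht1 hp c₁
    nlinarith
  have hden : (((q:ℝ) - 1) / (α + q - 1)) ^ d ≤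
      (∑ c, Aprod q d (1-β) p c) - (1-β) * Aprod q d (1-β) p c₂ := by
    haveI : Nontrivial (Fin q) := Fin.nontrivial_iff_two_le.mpr (by omega)
    obtain ⟨c', hc'⟩ := exists_ne c₂
    calc (((q:ℝ) - 1) / (α + q - 1)) ^ d ≤ Aprod q d (1-β) p c' :=
        Aprod_ge hq hα ht0 ht1 hp c'
    _ ≤ ∑ c'' ∈ Finset.univ.erase c₂, Aprod q d (1-β) p c'' :=
        Finset.single_le_sum (fun i _ => (Aprod_pos hq ht0 ht1 hp i).le)
          (Finset.mem_erase.mpr ⟨hc', Finset.mem_univ c'⟩)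
    _ ≤ _ := (S_sub_pos hq ht0 ht1 hp ht1 c₂).1
  have hd0 : (0:ℝ) < (((q:ℝ) - 1) / (α + q - 1)) ^ d :=
    pow_pos (div_pos (by linarith) (by linarith)) d
  exact div_le_div₀ (by linarith) hnum hd0 hden

lemma unif_mem (hq : 3 ≤ q) (hα : 1 < α) :
    (fun _ : Fin q => (q:ℝ)⁻¹) ∈ simplexAlpha q α := by
  have hq0 : (0:ℝ) < (q:ℝ) := by
    have : (3:ℝ) ≤ (q:ℝ) := by exact_mod_cast hq
    linarith
  refine ⟨fun _ => by positivity, ?_, fun i j => ?_⟩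
  · rw [Finset.sum_const, Finset.card_univ, Fintype.card_fin, nsmul_eq_mul]
    field_simp
  · show (q:ℝ)⁻¹ ≤ α * (q:ℝ)⁻¹
    exact le_mul_of_one_le_left (by positivity) hα.le

lemma hfun_unif (hq : 3 ≤ q) (hα : 1 < α) (h0 : 0 ≤ β) (h1 : β ≤ 1) (c₁ c₂ : Fin q) :
    hfun q d β c₁ c₂ (fun _ _ => (q:ℝ)⁻¹) = 1 := by
  have hp : ∀ k : Fin d, (fun _ : Fin q => (q:ℝ)⁻¹) ∈ simplexAlpha q α :=
    fun _ => unif_mem hq hα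
  rw [hfun_eq hq h0 h1 hp c₁ c₂]
  have h := (S_sub_pos (t := 1 - β) (s := 1 - β) hq (by linarith) (by linarith) hp (by linarith) c₂).2
  have he : Aprod q d (1-β) (fun _ _ => (q:ℝ)⁻¹) c₁
      = Aprod q d (1-β) (fun _ _ => (q:ℝ)⁻¹) c₂ := rfl
  rw [he, div_self (ne_of_gt h)]

/-- The key step: given `p ∈ Δ_α^d` with `A_{c₁} ≤ A_{c₂}` at inverse-temperature
parameter `t₂`, the rescaled configuration `p'` realises at parameter `t₁ ≥ t₂`
a ratio at least as large. -/
lemma key_step (hq : 3 ≤ q) (hα : 1 < α) {t₁ t₂ : ℝ}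
    (ht₂0 : 0 < t₂) (ht : t₂ ≤ t₁) (ht₁1 : t₁ ≤ 1)
    (hp : ∀ k, p k ∈ simplexAlpha q α) (c₁ c₂ : Fin q)
    (hA : Aprod q d t₂ p c₁ ≤ Aprod q d t₂ p c₂) :
    ∃ p' : Fin d → Fin q → ℝ, (∀ k, p' k ∈ simplexAlpha q α) ∧
      ((∑ c, Aprod q d t₂ p c) - t₂ * Aprod q d t₂ p c₁) /
        ((∑ c, Aprod q d t₂ p c) - t₂ * Aprod q d t₂ p c₂) ≤
      ((∑ c, Aprod q d t₁ p' c) - t₁ * Aprod q d t₁ p' c₁) /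
        ((∑ c, Aprod q d t₁ p' c) - t₁ * Aprod q d t₁ p' c₂) := by
  have hq3 : (3:ℝ) ≤ (q:ℝ) := by exact_mod_cast hq
  have ht₁0 : 0 < t₁ := lt_of_lt_of_le ht₂0 ht
  have ht₂1 : t₂ ≤ 1 := le_trans ht ht₁1
  have hqt₂ : 0 < (q:ℝ) - t₂ := by linarith
  have hqt₁ : 0 < (q:ℝ) - t₁ := by linarith
  set κ : ℝ := ((q:ℝ) - t₁) / ((q:ℝ) - t₂) with hκdef
  have hκ0 : 0 < κ := div_pos hqt₁ hqt₂
  have hκ1 : κ ≤ 1 := by rw [div_le_one hqt₂]; linarith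
  refine ⟨fun k c => (κ * t₂ / t₁) * p k c + (1 - κ) / t₁, ?_, ?_⟩
  · intro k
    obtain ⟨hp0, hps, hpr⟩ := hp k
    refine ⟨fun i => ?_, ?_, fun i j => ?_⟩
    · exact add_nonneg (mul_nonneg (by positivity) (hp0 i))
        (div_nonneg (by linarith) ht₁0.le)
    · rw [Finset.sum_add_distrib, ← Finset.mul_sum, hps, Finset.sum_const,
        Finset.card_univ, Fintype.card_fin, nsmul_eq_mul, hκdef]
      field_simp
      ring
    · have h1 := hpr i j
      have hμ : 0 ≤ κ * t₂ / t₁ := by positivity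
      have hν : 0 ≤ (1 - κ) / t₁ := div_nonneg (by linarith) ht₁0.le
      have h2 := mul_le_mul_of_nonneg_left h1 hμ
      nlinarith
  · have hAeq : ∀ c, Aprod q d t₁ (fun k c => (κ * t₂ / t₁) * p k c + (1 - κ) / t₁) c
        = κ ^ d * Aprod q d t₂ p c := by
      intro c
      rw [Aprod, Aprod]
      calc (∏ k : Fin d, (1 - t₁ * ((κ * t₂ / t₁) * p k c + (1 - κ) / t₁)))
          = ∏ k : Fin d, (κ * (1 - t₂ * p k c)) := by
            refine Finset.prod_congr rfl fun k _ => ?_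
            field_simp
            ring
      _ = κ ^ d * ∏ k : Fin d, (1 - t₂ * p k c) := by
            rw [Finset.prod_mul_distrib, Finset.prod_const, Finset.card_univ,
              Fintype.card_fin]
    have hSnew : (∑ c, Aprod q d t₁ (fun k c => (κ * t₂ / t₁) * p k c + (1 - κ) / t₁) c)
        = κ ^ d * ∑ c, Aprod q d t₂ p c := by
      rw [Finset.mul_sum]
      exact Finset.sum_congr rfl fun c _ => hAeq c
    rw [hSnew, hAeq c₁, hAeq c₂]
    have hκd : 0 < κ ^ d := pow_pos hκ0 d
    have e1 : κ^d * (∑ c, Aprod q d t₂ p c) - t₁ * (κ^d * Aprod q d t₂ p c₁)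
        = κ^d * ((∑ c, Aprod q d t₂ p c) - t₁ * Aprod q d t₂ p c₁) := by ring
    have e2 : κ^d * (∑ c, Aprod q d t₂ p c) - t₁ * (κ^d * Aprod q d t₂ p c₂)
        = κ^d * ((∑ c, Aprod q d t₂ p c) - t₁ * Aprod q d t₂ p c₂) := by ring
    rw [e1, e2, mul_div_mul_left _ _ (ne_of_gt hκd)]
    have hd2 := (S_sub_pos hq ht₂0.le ht₂1 hp (s := t₂) ht₂1 c₂).2
    have hd1 := (S_sub_pos hq ht₂0.le ht₂1 hp (s := t₁) ht₁1 c₂).2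
    rw [div_le_div_iff₀ hd2 hd1]
    have hS : 0 < ∑ c, Aprod q d t₂ p c :=
      Finset.sum_pos (fun c _ => Aprod_pos hq ht₂0.le ht₂1 hp c) ⟨c₂, Finset.mem_univ c₂⟩
    nlinarith [mul_nonneg (mul_nonneg hS.le (sub_nonneg.mpr ht))
      (sub_nonneg.mpr hA)]

end Main

end PottsAux

/-- Monotonicity of `M_{α,c₁,c₂,β}` in `β`: for `β' ≤ β''` in `[0,1)`,
`M_{α,c₁,c₂,β''} ≤ M_{α,c₁,c₂,β'}` for all `α > 1` and all colours. -/
theorem Mval_antitone_in_beta (q d : ℕ) (hq : 3 ≤ q) (hd : 2 ≤ d)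
    (β' β'' : ℝ) (h0' : 0 ≤ β') (h1' : β' < 1) (h0'' : 0 ≤ β'') (h1'' : β'' < 1)
    (hle : β' ≤ β'') (α : ℝ) (hα : 1 < α) (c₁ c₂ : Fin q) :
    Mval q d α β'' c₁ c₂ ≤ Mval q d α β' c₁ c₂ := by
  classical
  have hq3 : (3:ℝ) ≤ (q:ℝ) := by exact_mod_cast hq
  have hpuD : (fun _ _ => (q:ℝ)⁻¹) ∈
      {p : Fin d → Fin q → ℝ | ∀ k, p k ∈ simplexAlpha q α} :=
    fun _ => PottsAux.unif_mem hq hα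
  have hbdd : BddAbove (hfun q d β' c₁ c₂ ''
      {p : Fin d → Fin q → ℝ | ∀ k, p k ∈ simplexAlpha q α}) := by
    refine ⟨(q : ℝ) / (((q:ℝ) - 1) / (α + q - 1)) ^ d, ?_⟩
    rintro x ⟨p, hp, rfl⟩
    exact PottsAux.hfun_le hq hα h0' h1'.le hp c₁ c₂
  have hone : (1:ℝ) ≤ Mval q d α β' c₁ c₂ := by
    have h := le_csSup hbdd (Set.mem_image_of_mem _ hpuD)
    rwa [PottsAux.hfun_unif hq hα h0' h1'.le c₁ c₂] at h
  rw [Mval]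
  apply csSup_le ⟨_, Set.mem_image_of_mem _ hpuD⟩
  rintro x ⟨p, hpD, rfl⟩
  by_cases hcase : hfun q d β'' c₁ c₂ p ≤ 1
  · exact le_trans hcase hone
  · push_neg at hcase
    have ht₂0 : (0:ℝ) < 1 - β'' := by linarith
    have ht₂1 : (1:ℝ) - β'' ≤ 1 := by linarith
    have hAlt : PottsAux.Aprod q d (1 - β'') p c₁ ≤ PottsAux.Aprod q d (1 - β'') p c₂ := by
      rw [PottsAux.hfun_eq hq h0'' h1''.le hpD c₁ c₂] at hcase
      have hd2 := (PottsAux.S_sub_pos (s := 1 - β'') hq ht₂0.le ht₂1 hpD ht₂1 c₂).2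
      have h2 := (one_lt_div hd2).mp hcase
      nlinarith
    obtain ⟨p', hp'D, hkey⟩ := PottsAux.key_step (t₁ := 1 - β') (t₂ := 1 - β'')
      hq hα ht₂0 (by linarith) (by linarith) hpD c₁ c₂ hAlt
    calc hfun q d β'' c₁ c₂ p
        ≤ hfun q d β' c₁ c₂ p' := by
          rw [PottsAux.hfun_eq hq h0'' h1''.le hpD c₁ c₂,
            PottsAux.hfun_eq hq h0' h1'.le hp'D c₁ c₂]
          exact hkey
    _ ≤ Mval q d α β' c₁ c₂ := le_csSup hbdd (Set.mem_image_of_mem _ hp'D)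
end

section
/- Let q ≥ 3, d ≥ 2 and β ∈ (0,1). Suppose that for some integer n ≥ 3 and some α > 1 it holds that γ(q,β,d,n−2) = α and M_{α,c₁,c₂,β} < α^{1/d} for all colours c₁, c₂ ∈ [q]. Then γ(q,β,d,n) ≤ max_{c₁,c₂∈[q]} (M_{α,c₁,c₂,β})^d < γ(q,β,d,n−2). -/
open Filter

/-! ### Auxiliary infrastructure -/

namespace PottsAux

/-- Vertex type of the `d`-ary tree of height `m`. -/
abbrev Vtx (d m : ℕ) := Σ k : Fin (m + 1), (Fin k → Fin d)

/-- Edge type of the `d`-ary tree of height `m`. -/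
abbrev Edg (d m : ℕ) := Σ k : Fin m, (Fin (k + 1) → Fin d)

/-- Partition function with root colour `c` and boundary `τ`. -/
noncomputable def Zs (q d m : ℕ) (β : ℝ) (τ : (Fin m → Fin d) → Fin q) (c : Fin q) : ℝ :=
  ∑ σ ∈ Finset.univ.filter
      (fun σ : Vtx d m → Fin q =>
        σ ⟨⟨0, m.succ_pos⟩, Fin.elim0⟩ = c ∧
          ∀ f : Fin m → Fin d, σ ⟨⟨m, m.lt_succ_self⟩, f⟩ = τ f),
      treeWeight q d m β σ

lemma treeWeight_eq_prod (q d m : ℕ) (β : ℝ) (σ : Vtx d m → Fin q) :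
    treeWeight q d m β σ =
      ∏ e : Edg d m, (if σ ⟨e.1.succ, e.2⟩ = σ ⟨e.1.castSucc, fun i => e.2 i.castSucc⟩
        then β else (1:ℝ)) := by
  rw [Finset.prod_ite, Finset.prod_const, Finset.prod_const_one, mul_one, treeWeight]

/-- Push a vertex of the height-`m` tree into the subtree of child `j` of the
height-`m+1` tree. -/
def liftV (d m : ℕ) (j : Fin d) : Vtx d m → Vtx d (m + 1)
  | ⟨⟨kv, h⟩, f⟩ => ⟨⟨kv + 1, Nat.succ_lt_succ h⟩, Fin.cons j f⟩

/-- Restrict a configuration on the height-`m+1` tree to the subtree of child `j`. -/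
def decC {q d m : ℕ} (σ : Vtx d (m + 1) → Fin q) (j : Fin d) : Vtx d m → Fin q :=
  fun v => σ (liftV d m j v)

/-- Assemble a configuration on the height-`m+1` tree from a root colour and
configurations on the `d` subtrees. -/
def encC {q d m : ℕ} (c : Fin q) (σs : Fin d → Vtx d m → Fin q) : Vtx d (m + 1) → Fin q
  | ⟨⟨0, _⟩, _⟩ => c
  | ⟨⟨kv + 1, h⟩, g⟩ =>
      σs (g ⟨0, Nat.succ_pos _⟩) ⟨⟨kv, Nat.lt_of_succ_lt_succ h⟩, fun i => g i.succ⟩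

/-- Edges of the height-`m+1` tree: the `d` root edges plus the edges of the
`d` subtrees. -/
def edgeEquiv (d m : ℕ) : (Fin d ⊕ (Fin d × Edg d m)) ≃ Edg d (m + 1) where
  toFun x :=
    match x with
    | .inl j => ⟨⟨0, Nat.succ_pos m⟩, fun _ => j⟩
    | .inr (j, ⟨⟨kv, h⟩, f⟩) => ⟨⟨kv + 1, Nat.succ_lt_succ h⟩, Fin.cons j f⟩
  invFun e :=
    match e with
    | ⟨⟨0, _⟩, g⟩ => .inl (g ⟨0, Nat.one_pos⟩)
    | ⟨⟨kv + 1, h⟩, g⟩ =>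
        .inr (g ⟨0, Nat.succ_pos _⟩, ⟨⟨kv, Nat.lt_of_succ_lt_succ h⟩, fun i => g i.succ⟩)
  left_inv x := by
    rcases x with j | ⟨j, ⟨⟨kv, h⟩, f⟩⟩
    · rfl
    · have h0 : Fin.cons (α := fun _ => Fin d) j f ⟨0, Nat.succ_pos _⟩ = j := rfl
      have h1 : (fun i : Fin (kv + 1) => Fin.cons (α := fun _ => Fin d) j f i.succ) = f :=
        funext fun i => rfl
      simp only [h0, h1]
  right_inv e := by
    rcases e with ⟨⟨kv, h⟩, g⟩
    cases kv with
    | zero =>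
        show (⟨⟨0, Nat.succ_pos m⟩, fun _ => g ⟨0, Nat.one_pos⟩⟩ : Edg d (m+1)) = _
        congr 1
        funext i
        have : i = ⟨0, Nat.one_pos⟩ := Fin.ext (by have h1 : (i:ℕ) < 1 := i.isLt; show (i:ℕ) = 0; omega)
        rw [this]
    | succ kv =>
        show (⟨⟨kv + 1, Nat.succ_lt_succ (Nat.lt_of_succ_lt_succ h)⟩,
          Fin.cons (g ⟨0, Nat.succ_pos _⟩) (fun i => g i.succ)⟩ : Edg d (m+1)) = _
        congr 1
        exact Fin.cons_self_tail g


lemma weight_encC (q d m : ℕ) (β : ℝ) (c : Fin q) (σs : Fin d → Vtx d m → Fin q) :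
    treeWeight q d (m + 1) β (encC c σs) =
      ∏ j : Fin d, ((if σs j ⟨⟨0, m.succ_pos⟩, Fin.elim0⟩ = c then β else 1) *
        treeWeight q d m β (σs j)) := by
  have key : ∀ x : Fin d ⊕ (Fin d × Edg d m),
      (fun e : Edg d (m + 1) => if encC c σs ⟨e.1.succ, e.2⟩ =
          encC c σs ⟨e.1.castSucc, fun i => e.2 i.castSucc⟩ then β else (1 : ℝ))
        (edgeEquiv d m x) =
      Sum.elim
        (fun j : Fin d => if σs j ⟨⟨0, m.succ_pos⟩, Fin.elim0⟩ = c then β else (1 : ℝ))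
        (fun p : Fin d × Edg d m => if σs p.1 ⟨p.2.1.succ, p.2.2⟩ =
            σs p.1 ⟨p.2.1.castSucc, fun i => p.2.2 i.castSucc⟩ then β else (1 : ℝ)) x := by
    rintro (j | ⟨j, ⟨⟨kv, h⟩, f⟩⟩)
    · show (if σs j ⟨⟨0, m.succ_pos⟩, fun i : Fin 0 => (fun _ : Fin 1 => j) i.succ⟩ = c
          then β else (1 : ℝ)) =
        (if σs j ⟨⟨0, m.succ_pos⟩, Fin.elim0⟩ = c then β else (1 : ℝ))
      rw [show (fun i : Fin 0 => (fun _ : Fin 1 => j) i.succ) = Fin.elim0 from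
        funext fun i => i.elim0]
    · rfl
  rw [treeWeight_eq_prod, ← Equiv.prod_comp (edgeEquiv d m)
    (fun e : Edg d (m + 1) => if encC c σs ⟨e.1.succ, e.2⟩ =
        encC c σs ⟨e.1.castSucc, fun i => e.2 i.castSucc⟩ then β else (1 : ℝ))]
  simp only [key]
  rw [Fintype.prod_sum_type, Fintype.prod_prod_type, Finset.prod_mul_distrib]
  congr 1
  apply Finset.prod_congr rfl
  intro j _
  rw [treeWeight_eq_prod]
  rfl


lemma sum_root_fiber (q d m : ℕ) (τ : (Fin m → Fin d) → Fin q)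
    (F : (Vtx d m → Fin q) → ℝ) :
    ∑ c : Fin q, ∑ σ ∈ Finset.univ.filter
        (fun σ : Vtx d m → Fin q =>
          σ ⟨⟨0, m.succ_pos⟩, Fin.elim0⟩ = c ∧
            ∀ f : Fin m → Fin d, σ ⟨⟨m, m.lt_succ_self⟩, f⟩ = τ f), F σ
      = ∑ σ ∈ Finset.univ.filter
          (fun σ : Vtx d m → Fin q =>
            ∀ f : Fin m → Fin d, σ ⟨⟨m, m.lt_succ_self⟩, f⟩ = τ f), F σ := by
  rw [← Finset.sum_fiberwise
    (Finset.univ.filter (fun σ : Vtx d m → Fin q =>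
      ∀ f : Fin m → Fin d, σ ⟨⟨m, m.lt_succ_self⟩, f⟩ = τ f))
    (fun σ => σ ⟨⟨0, m.succ_pos⟩, Fin.elim0⟩) F]
  apply Finset.sum_congr rfl
  intro c _
  apply Finset.sum_congr _ (fun _ _ => rfl)
  rw [Finset.filter_filter]
  apply Finset.filter_congr
  intro σ _
  tauto

lemma Zs_succ (q d m : ℕ) (β : ℝ) (τ : (Fin (m + 1) → Fin d) → Fin q) (c : Fin q) :
    Zs q d (m + 1) β τ c = ∏ j : Fin d, ∑ c' : Fin q,
      (if c' = c then β else 1) * Zs q d m β (fun f => τ (Fin.cons j f)) c' := by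
  have inner : ∀ j : Fin d,
      (∑ c' : Fin q, (if c' = c then β else 1) * Zs q d m β (fun f => τ (Fin.cons j f)) c')
        = ∑ σ ∈ Finset.univ.filter (fun σ : Vtx d m → Fin q =>
            ∀ f : Fin m → Fin d, σ ⟨⟨m, m.lt_succ_self⟩, f⟩ = τ (Fin.cons j f)),
            (if σ ⟨⟨0, m.succ_pos⟩, Fin.elim0⟩ = c then β else 1) * treeWeight q d m β σ := by
    intro j
    rw [← sum_root_fiber q d m (fun f => τ (Fin.cons j f))
      (fun σ => (if σ ⟨⟨0, m.succ_pos⟩, Fin.elim0⟩ = c then β else 1) * treeWeight q d m β σ)]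
    apply Finset.sum_congr rfl
    intro c' _
    rw [Zs, Finset.mul_sum]
    apply Finset.sum_congr rfl
    intro σ hσ
    rw [(Finset.mem_filter.mp hσ).2.1]
  simp only [inner]
  rw [Finset.prod_univ_sum]
  rw [Zs]
  refine Finset.sum_nbij' (fun σ => fun j => decC σ j) (fun σs => encC c σs) ?_ ?_ ?_ ?_ ?_
  · -- maps to piFinset
    intro σ hσ
    rw [Fintype.mem_piFinset]
    intro j
    rw [Finset.mem_filter]
    refine ⟨Finset.mem_univ _, ?_⟩
    intro f
    exact (Finset.mem_filter.mp hσ).2.2 (Fin.cons j f)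
  · -- encC maps to filter
    intro σs hσs
    rw [Fintype.mem_piFinset] at hσs
    rw [Finset.mem_filter]
    refine ⟨Finset.mem_univ _, rfl, ?_⟩
    intro f
    have h1 : encC c σs ⟨⟨(m + 1 : ℕ), (m+1).lt_succ_self⟩, f⟩
        = σs (f ⟨0, Nat.succ_pos m⟩) ⟨⟨m, m.lt_succ_self⟩, fun i => f i.succ⟩ := rfl
    show encC c σs ⟨⟨(m + 1 : ℕ), (m + 1).lt_succ_self⟩, f⟩ = τ f
    rw [h1, (Finset.mem_filter.mp (hσs (f ⟨0, Nat.succ_pos m⟩))).2 (fun i => f i.succ)]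
    exact congrArg τ (Fin.cons_self_tail f)
  · -- left inverse
    intro σ hσ
    funext v
    rcases v with ⟨⟨kv, h⟩, g⟩
    cases kv with
    | zero =>
        have h2 : g = Fin.elim0 := funext fun i => i.elim0
        subst h2
        exact ((Finset.mem_filter.mp hσ).2.1).symm ▸ rfl
    | succ kv =>
        show σ ⟨⟨kv + 1, h⟩, Fin.cons (g ⟨0, Nat.succ_pos kv⟩) (fun i => g i.succ)⟩
          = σ ⟨⟨kv + 1, h⟩, g⟩
        exact congrArg (fun t => σ ⟨⟨kv + 1, h⟩, t⟩) (Fin.cons_self_tail g)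
  · -- right inverse
    intro σs _
    funext j v
    rcases v with ⟨⟨kv, h⟩, f⟩
    rfl
  · -- weights agree
    intro σ hσ
    have h3 : encC c (fun j => decC σ j) = σ := by
      funext v
      rcases v with ⟨⟨kv, h⟩, g⟩
      cases kv with
      | zero =>
          have h2 : g = Fin.elim0 := funext fun i => i.elim0
          subst h2
          exact ((Finset.mem_filter.mp hσ).2.1).symm ▸ rfl
      | succ kv =>
          show σ ⟨⟨kv + 1, h⟩, Fin.cons (g ⟨0, Nat.succ_pos kv⟩) (fun i => g i.succ)⟩
            = σ ⟨⟨kv + 1, h⟩, g⟩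
          exact congrArg (fun t => σ ⟨⟨kv + 1, h⟩, t⟩) (Fin.cons_self_tail g)
    calc treeWeight q d (m + 1) β σ
        = treeWeight q d (m + 1) β (encC c (fun j => decC σ j)) := by rw [h3]
      _ = _ := weight_encC q d m β c (fun j => decC σ j)


lemma Zs_nonneg (q d m : ℕ) (β : ℝ) (hβ : 0 ≤ β) (τ : (Fin m → Fin d) → Fin q) (c : Fin q) :
    0 ≤ Zs q d m β τ c :=
  Finset.sum_nonneg fun σ _ => by rw [treeWeight]; positivity

lemma Zs_pos (q d m : ℕ) (β : ℝ) (hβ : 0 < β) (hm : 0 < m) (τ : (Fin m → Fin d) → Fin q)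
    (c : Fin q) : 0 < Zs q d m β τ c := by
  apply Finset.sum_pos
  · intro σ _
    rw [treeWeight]
    positivity
  · refine ⟨fun v => if hv : (v.1 : ℕ) = m
      then τ (fun i => v.2 ⟨i.val, lt_of_lt_of_eq i.isLt hv.symm⟩) else c, ?_⟩
    rw [Finset.mem_filter]
    refine ⟨Finset.mem_univ _, ?_, ?_⟩
    · exact dif_neg hm.ne
    · intro f
      show (if hv : (m : ℕ) = m
          then τ (fun i => f ⟨i.val, lt_of_lt_of_eq i.isLt hv.symm⟩) else c) = τ f
      rw [dif_pos rfl]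
    
lemma condRootProb_eq (q d m : ℕ) (β : ℝ) (τ : (Fin m → Fin d) → Fin q) (c : Fin q) :
    condRootProb q d m β τ c = Zs q d m β τ c / ∑ c' : Fin q, Zs q d m β τ c' := by
  rw [condRootProb, ← sum_root_fiber q d m τ (treeWeight q d m β)]
  rfl

lemma ite_sum_split (q : ℕ) (β : ℝ) (v : Fin q → ℝ) (c : Fin q) :
    ∑ c' : Fin q, (if c' = c then β else 1) * v c'
      = β * v c + ∑ c' ∈ Finset.univ.erase c, v c' := by
  rw [← Finset.sum_erase_add Finset.univ _ (Finset.mem_univ c), if_pos rfl, add_comm]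
  congr 1
  apply Finset.sum_congr rfl
  intro c' hc'
  rw [if_neg (Finset.mem_erase.mp hc').1, one_mul]

lemma factor_eq (q : ℕ) (β : ℝ) (v : Fin q → ℝ) (c c₂ : Fin q)
    (hD : β * v c₂ + ∑ c' ∈ Finset.univ.erase c₂, v c' ≠ 0) :
    1 - ((1 - β) * (v c - v c₂)) / (β * v c₂ + ∑ c' ∈ Finset.univ.erase c₂, v c')
      = (β * v c + ∑ c' ∈ Finset.univ.erase c, v c')
        / (β * v c₂ + ∑ c' ∈ Finset.univ.erase c₂, v c') := by
  rw [Finset.sum_erase_eq_sub (Finset.mem_univ c), Finset.sum_erase_eq_sub (Finset.mem_univ c₂)]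
    at *
  field_simp
  ring

/-- positivity of the soft-max style denominator. -/
lemma D_pos (q : ℕ) (β : ℝ) (hβ : 0 < β) (v : Fin q → ℝ) (hv : ∀ i, 0 < v i) (c : Fin q) :
    0 < β * v c + ∑ c' ∈ Finset.univ.erase c, v c' :=
  add_pos_of_pos_of_nonneg (mul_pos hβ (hv c))
    (Finset.sum_nonneg fun c' _ => (hv c').le)

lemma gfun_eq_prod (q d : ℕ) (β : ℝ) (hβ : 0 < β) (c c₂ : Fin q) (p : Fin d → Fin q → ℝ)
    (hp : ∀ k i, 0 < p k i) :
    gfun q d β c c₂ p = ∏ k : Fin d,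
      ((β * p k c + ∑ c' ∈ Finset.univ.erase c, p k c')
        / (β * p k c₂ + ∑ c' ∈ Finset.univ.erase c₂, p k c')) := by
  rw [gfun]
  exact Finset.prod_congr rfl fun k _ =>
    factor_eq q β (p k) c c₂ (D_pos q β hβ (p k) (hp k) c₂).ne'

lemma gfun_pos (q d : ℕ) (β : ℝ) (hβ : 0 < β) (c c₂ : Fin q) (p : Fin d → Fin q → ℝ)
    (hp : ∀ k i, 0 < p k i) : 0 < gfun q d β c c₂ p := by
  rw [gfun_eq_prod q d β hβ c c₂ p hp]
  exact Finset.prod_pos fun k _ =>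
    div_pos (D_pos q β hβ (p k) (hp k) c) (D_pos q β hβ (p k) (hp k) c₂)

lemma gfun_self (q d : ℕ) (β : ℝ) (c : Fin q) (p : Fin d → Fin q → ℝ) :
    gfun q d β c c p = 1 := by
  rw [gfun]
  simp [sub_self]

lemma hfun_eq_s10 (q d : ℕ) (β : ℝ) (hβ : 0 < β) (c₁ c₂ : Fin q) (p : Fin d → Fin q → ℝ)
    (hg : ∀ c, 0 < gfun q d β c c₂ p) :
    hfun q d β c₁ c₂ p =
      (β * gfun q d β c₁ c₂ p + ∑ c ∈ Finset.univ.erase c₁, gfun q d β c c₂ p)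
        / (β * gfun q d β c₂ c₂ p + ∑ c ∈ Finset.univ.erase c₂, gfun q d β c c₂ p) := by
  have hs : ∀ c : Fin q, (0:ℝ) ≤ gfun q d β c c₂ p := fun c => (hg c).le
  have hden : (0:ℝ) < β + ∑ c ∈ Finset.univ.erase c₂, gfun q d β c c₂ p :=
    add_pos_of_pos_of_nonneg hβ (Finset.sum_nonneg fun c _ => hs c)
  rw [hfun, gfun_self]
  rw [Finset.sum_erase_eq_sub (Finset.mem_univ c₁), Finset.sum_erase_eq_sub (Finset.mem_univ c₂)]
  rw [Finset.sum_erase_eq_sub (Finset.mem_univ c₂)] at hden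
  rw [gfun_self] at *
  field_simp
  ring


lemma simplexAlpha_pos (q : ℕ) (α : ℝ) (hα : 0 < α) {p : Fin q → ℝ}
    (hp : p ∈ simplexAlpha q α) (i : Fin q) : 0 < p i := by
  obtain ⟨hnn, hsum, hratio⟩ := hp
  rcases lt_or_eq_of_le (hnn i) with h | h
  · exact h
  exfalso
  have hzero : ∀ j, p j = 0 := by
    intro j
    have := hratio j i
    rw [← h] at this
    simp only [mul_zero] at this
    exact le_antisymm this (hnn j)
  rw [Finset.sum_congr rfl (fun j _ => hzero j)] at hsum
  simp at hsum

lemma condRootProb_pos (q d m : ℕ) (hq : 0 < q) (β : ℝ) (hβ : 0 < β) (hm : 0 < m)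
    (τ : (Fin m → Fin d) → Fin q) (c : Fin q) : 0 < condRootProb q d m β τ c := by
  rw [condRootProb_eq]
  exact div_pos (Zs_pos q d m β hβ hm τ c)
    (Finset.sum_pos (fun c' _ => Zs_pos q d m β hβ hm τ c')
      (Finset.univ_nonempty_iff.mpr ⟨⟨0, hq⟩⟩))

lemma ratio_le_gamma (q d m : ℕ) (β : ℝ) (τ : (Fin m → Fin d) → Fin q) (i j : Fin q) :
    condRootProb q d m β τ i / condRootProb q d m β τ j ≤ pottsGamma q d β m :=
  calc condRootProb q d m β τ i / condRootProb q d m β τ j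
      ≤ ⨆ c₂' : Fin q, condRootProb q d m β τ i / condRootProb q d m β τ c₂' :=
        le_ciSup (f := fun c₂' : Fin q =>
          condRootProb q d m β τ i / condRootProb q d m β τ c₂')
          (Set.finite_range _).bddAbove j
    _ ≤ ⨆ c₁' : Fin q, ⨆ c₂' : Fin q,
          condRootProb q d m β τ c₁' / condRootProb q d m β τ c₂' :=
        le_ciSup (f := fun c₁' : Fin q => ⨆ c₂' : Fin q,
          condRootProb q d m β τ c₁' / condRootProb q d m β τ c₂')
          (Set.finite_range _).bddAbove i
    _ ≤ pottsGamma q d β m :=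
        le_ciSup (f := fun τ' : (Fin m → Fin d) → Fin q => ⨆ c₁' : Fin q, ⨆ c₂' : Fin q,
          condRootProb q d m β τ' c₁' / condRootProb q d m β τ' c₂')
          (Set.finite_range _).bddAbove τ

lemma condRootProb_mem (q d m : ℕ) (hq : 0 < q) (β α : ℝ) (hβ : 0 < β) (hm : 0 < m)
    (hγ : pottsGamma q d β m = α) (τ : (Fin m → Fin d) → Fin q) :
    (fun c => condRootProb q d m β τ c) ∈ simplexAlpha q α := by
  have hpos := condRootProb_pos q d m hq β hβ hm τ
  refine ⟨fun i => (hpos i).le, ?_, ?_⟩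
  · have hSpos : 0 < ∑ c' : Fin q, Zs q d m β τ c' :=
      Finset.sum_pos (fun c' _ => Zs_pos q d m β hβ hm τ c')
        (Finset.univ_nonempty_iff.mpr ⟨⟨0, hq⟩⟩)
    simp only [condRootProb_eq]
    rw [← Finset.sum_div, div_self hSpos.ne']
  · intro i j
    have h := ratio_le_gamma q d m β τ i j
    rw [hγ] at h
    exact (div_le_iff₀ (hpos j)).mp h

lemma hfun_le_bound (q d : ℕ) (β α : ℝ) (hβ0 : 0 < β) (hβ1 : β ≤ 1) (hα : 0 < α)
    (c₁ c₂ : Fin q) (p : Fin d → Fin q → ℝ) (hp : ∀ k, p k ∈ simplexAlpha q α) :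
    hfun q d β c₁ c₂ p ≤ 1 + (1 - β) / β := by
  have hppos : ∀ k i, 0 < p k i := fun k i => simplexAlpha_pos q α hα (hp k) i
  have hg : ∀ c, 0 < gfun q d β c c₂ p := fun c => gfun_pos q d β hβ0 c c₂ p hppos
  have hden : 0 < β + ∑ c ∈ Finset.univ.erase c₂, gfun q d β c c₂ p :=
    add_pos_of_pos_of_nonneg hβ0 (Finset.sum_nonneg fun c _ => (hg c).le)
  rw [hfun]
  have hkey : (1 - β) * (1 - gfun q d β c₁ c₂ p)
      / (β + ∑ c ∈ Finset.univ.erase c₂, gfun q d β c c₂ p) ≤ (1 - β) / β := by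
    rcases le_or_gt (1 - gfun q d β c₁ c₂ p) 0 with h | h
    · exact le_trans (div_nonpos_of_nonpos_of_nonneg
        (mul_nonpos_of_nonneg_of_nonpos (by linarith) h) hden.le)
        (div_nonneg (by linarith) hβ0.le)
    · apply div_le_div₀ (by linarith)
      · nlinarith [hg c₁]
      · exact hβ0
      · exact le_add_of_nonneg_right (Finset.sum_nonneg fun c _ => (hg c).le)
  linarith

lemma bddAbove_hfun_image (q d : ℕ) (β α : ℝ) (hβ0 : 0 < β) (hβ1 : β ≤ 1) (hα : 0 < α)
    (c₁ c₂ : Fin q) :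
    BddAbove ((hfun q d β c₁ c₂) '' {p | ∀ k, p k ∈ simplexAlpha q α}) := by
  refine ⟨1 + (1 - β) / β, ?_⟩
  rintro x ⟨p, hp, rfl⟩
  exact hfun_le_bound q d β α hβ0 hβ1 hα c₁ c₂ p hp

lemma hfun_le_Mval (q d : ℕ) (β α : ℝ) (hβ0 : 0 < β) (hβ1 : β ≤ 1) (hα : 0 < α)
    (c₁ c₂ : Fin q) (p : Fin d → Fin q → ℝ) (hp : ∀ k, p k ∈ simplexAlpha q α) :
    hfun q d β c₁ c₂ p ≤ Mval q d α β c₁ c₂ :=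
  le_csSup (bddAbove_hfun_image q d β α hβ0 hβ1 hα c₁ c₂) ⟨p, hp, rfl⟩

lemma uniform_mem (q : ℕ) (hq : 0 < q) (α : ℝ) (hα : 1 ≤ α) :
    (fun _ : Fin q => (q : ℝ)⁻¹) ∈ simplexAlpha q α := by
  have hq' : (0:ℝ) < (q:ℝ) := by exact_mod_cast hq
  refine ⟨fun _ => by positivity, ?_, ?_⟩
  · simp [Finset.sum_const, Finset.card_univ]
    rw [mul_inv_cancel₀ hq'.ne']
  · intro i j
    exact le_mul_of_one_le_left (by positivity) hα

lemma one_le_Mval (q d : ℕ) (hq : 0 < q) (β α : ℝ) (hβ0 : 0 < β) (hβ1 : β ≤ 1) (hα : 1 ≤ α)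
    (c₁ c₂ : Fin q) : 1 ≤ Mval q d α β c₁ c₂ := by
  have huni : ∀ k : Fin d, (fun _ : Fin q => (q : ℝ)⁻¹) ∈ simplexAlpha q α :=
    fun _ => uniform_mem q hq α hα
  have h1 : hfun q d β c₁ c₂ (fun _ _ => (q : ℝ)⁻¹) = 1 := by
    have hg : gfun q d β c₁ c₂ (fun _ _ => (q : ℝ)⁻¹) = 1 := by
      rw [gfun]
      simp
    rw [hfun, hg]
    simp
  calc (1:ℝ) = hfun q d β c₁ c₂ (fun _ _ => (q : ℝ)⁻¹) := h1.symm
    _ ≤ Mval q d α β c₁ c₂ :=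
      hfun_le_Mval q d β α hβ0 hβ1 (by linarith) c₁ c₂ _ huni


lemma aux_cancel {a x y : ℝ} (hy : y ≠ 0) : a * x = x / y * (a * y) := by
  field_simp

set_option maxHeartbeats 1000000 in
lemma ratio_le_Mval_pow (q d m : ℕ) (hq : 0 < q) (β α : ℝ) (hβ0 : 0 < β) (hβ1 : β < 1)
    (hα1 : 1 ≤ α) (hm : 0 < m) (hγ : pottsGamma q d β m = α)
    (τ : (Fin (m + 2) → Fin d) → Fin q) (c₁ c₂ : Fin q) :
    condRootProb q d (m + 2) β τ c₁ / condRootProb q d (m + 2) β τ c₂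
      ≤ Mval q d α β c₁ c₂ ^ d := by
  have hα0 : (0:ℝ) < α := by linarith
  -- the grandchild marginal vectors
  have hmem : ∀ j k : Fin d,
      (fun c => condRootProb q d m β (fun f => τ (Fin.cons j (Fin.cons k f))) c) ∈ simplexAlpha q α :=
    fun j k => condRootProb_mem q d m hq β α hβ0 hm hγ (fun f => τ (Fin.cons j (Fin.cons k f)))
  have hppos : ∀ j k : Fin d, ∀ i : Fin q, 0 < condRootProb q d m β (fun f => τ (Fin.cons j (Fin.cons k f))) i :=
    fun j k i => simplexAlpha_pos q α hα0 (hmem j k) i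
  have hg : ∀ (j : Fin d) (c : Fin q),
      0 < gfun q d β c c₂ (fun k => condRootProb q d m β (fun f => τ (Fin.cons j (Fin.cons k f)))) :=
    fun j c => gfun_pos q d β hβ0 c c₂ _ (hppos j)
  have hS : ∀ j k : Fin d, 0 < ∑ c : Fin q, Zs q d m β (fun f => τ (Fin.cons j (Fin.cons k f))) c :=
    fun j k => Finset.sum_pos (fun c _ => Zs_pos q d m β hβ0 hm (fun f => τ (Fin.cons j (Fin.cons k f))) c)
      (Finset.univ_nonempty_iff.mpr ⟨⟨0, hq⟩⟩)
  have hZp : ∀ (j k : Fin d) (c : Fin q), Zs q d m β (fun f => τ (Fin.cons j (Fin.cons k f))) c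
      = (∑ c' : Fin q, Zs q d m β (fun f => τ (Fin.cons j (Fin.cons k f))) c') * condRootProb q d m β (fun f => τ (Fin.cons j (Fin.cons k f))) c := by
    intro j k c
    rw [condRootProb_eq, mul_div_cancel₀ _ (hS j k).ne']
  -- partition functions at height m+1
  have hZ1 : ∀ (j : Fin d) (c : Fin q), Zs q d (m + 1) β (fun f => τ (Fin.cons j f)) c
      = ∏ k : Fin d, ((∑ c' : Fin q, Zs q d m β (fun f => τ (Fin.cons j (Fin.cons k f))) c')
          * (β * condRootProb q d m β (fun f => τ (Fin.cons j (Fin.cons k f))) c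
              + ∑ c' ∈ Finset.univ.erase c, condRootProb q d m β (fun f => τ (Fin.cons j (Fin.cons k f))) c')) := by
    intro j c
    rw [Zs_succ]
    apply Finset.prod_congr rfl
    intro k _
    rw [ite_sum_split q β (fun c' => Zs q d m β (fun f => τ (Fin.cons j (Fin.cons k f))) c') c]
    rw [mul_add, Finset.mul_sum]
    congr 1
    · rw [hZp j k c]
      ring
    · exact Finset.sum_congr rfl fun c' _ => hZp j k c'
  have hZ1c : ∀ (j : Fin d) (c : Fin q), Zs q d (m + 1) β (fun f => τ (Fin.cons j f)) c
      = gfun q d β c c₂ (fun k => condRootProb q d m β (fun f => τ (Fin.cons j (Fin.cons k f)))) * Zs q d (m + 1) β (fun f => τ (Fin.cons j f)) c₂ := by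
    intro j c
    rw [hZ1 j c, hZ1 j c₂,
      gfun_eq_prod q d β hβ0 c c₂ (fun k => condRootProb q d m β (fun f => τ (Fin.cons j (Fin.cons k f)))) (hppos j),
      ← Finset.prod_mul_distrib]
    apply Finset.prod_congr rfl
    intro k _
    exact aux_cancel (D_pos q β hβ0 _ (hppos j k) c₂).ne'
  have hW : ∀ j : Fin d, 0 < Zs q d (m + 1) β (fun f => τ (Fin.cons j f)) c₂ :=
    fun j => Zs_pos q d (m + 1) β hβ0 m.succ_pos (fun f => τ (Fin.cons j f)) c₂
  -- partition functions at height m+2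
  have hZ2 : ∀ c : Fin q, Zs q d (m + 2) β τ c
      = ∏ j : Fin d, (β * Zs q d (m + 1) β (fun f => τ (Fin.cons j f)) c
          + ∑ c' ∈ Finset.univ.erase c, Zs q d (m + 1) β (fun f => τ (Fin.cons j f)) c') := by
    intro c
    rw [Zs_succ]
    apply Finset.prod_congr rfl
    intro j _
    rw [ite_sum_split q β (fun c' => Zs q d (m + 1) β (fun f => τ (Fin.cons j f)) c') c]
  have hA : ∀ (j : Fin d) (c : Fin q),
      β * Zs q d (m + 1) β (fun f => τ (Fin.cons j f)) c + ∑ c' ∈ Finset.univ.erase c, Zs q d (m + 1) β (fun f => τ (Fin.cons j f)) c'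
        = (β * gfun q d β c c₂ (fun k => condRootProb q d m β (fun f => τ (Fin.cons j (Fin.cons k f))))
            + ∑ c' ∈ Finset.univ.erase c,
                gfun q d β c' c₂ (fun k => condRootProb q d m β (fun f => τ (Fin.cons j (Fin.cons k f)))))
          * Zs q d (m + 1) β (fun f => τ (Fin.cons j f)) c₂ := by
    intro j c
    calc β * Zs q d (m + 1) β (fun f => τ (Fin.cons j f)) c + ∑ c' ∈ Finset.univ.erase c, Zs q d (m + 1) β (fun f => τ (Fin.cons j f)) c'
        = β * (gfun q d β c c₂ (fun k => condRootProb q d m β (fun f => τ (Fin.cons j (Fin.cons k f))))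
              * Zs q d (m + 1) β (fun f => τ (Fin.cons j f)) c₂)
          + ∑ c' ∈ Finset.univ.erase c,
              gfun q d β c' c₂ (fun k => condRootProb q d m β (fun f => τ (Fin.cons j (Fin.cons k f))))
                * Zs q d (m + 1) β (fun f => τ (Fin.cons j f)) c₂ := by
          rw [← hZ1c j c]
          congr 1
          exact Finset.sum_congr rfl fun c' _ => hZ1c j c'
      _ = _ := by rw [← Finset.sum_mul]; ring
  -- express the ratio as a product of h-values
  have hNbig : 0 < ∑ c' : Fin q, Zs q d (m + 2) β τ c' :=
    Finset.sum_pos (fun c' _ => Zs_pos q d (m + 2) β hβ0 (by omega) τ c')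
      (Finset.univ_nonempty_iff.mpr ⟨⟨0, hq⟩⟩)
  rw [condRootProb_eq, condRootProb_eq, div_div_div_comm, div_self hNbig.ne', div_one,
    hZ2 c₁, hZ2 c₂, ← Finset.prod_div_distrib]
  have hfactor : ∀ j ∈ Finset.univ (α := Fin d),
      (β * Zs q d (m + 1) β (fun f => τ (Fin.cons j f)) c₁ + ∑ c' ∈ Finset.univ.erase c₁, Zs q d (m + 1) β (fun f => τ (Fin.cons j f)) c')
        / (β * Zs q d (m + 1) β (fun f => τ (Fin.cons j f)) c₂
            + ∑ c' ∈ Finset.univ.erase c₂, Zs q d (m + 1) β (fun f => τ (Fin.cons j f)) c')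
      = hfun q d β c₁ c₂ (fun k => condRootProb q d m β (fun f => τ (Fin.cons j (Fin.cons k f)))) := by
    intro j _
    rw [hA j c₁, hA j c₂, hfun_eq_s10 q d β hβ0 c₁ c₂ _ (hg j),
      mul_div_mul_right _ _ (hW j).ne']
  rw [Finset.prod_congr rfl hfactor]
  have hfle : ∀ j ∈ Finset.univ (α := Fin d),
      hfun q d β c₁ c₂ (fun k => condRootProb q d m β (fun f => τ (Fin.cons j (Fin.cons k f)))) ≤ Mval q d α β c₁ c₂ :=
    fun j _ => hfun_le_Mval q d β α hβ0 hβ1.le hα0 c₁ c₂ _ (fun k => hmem j k)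
  have hfnn : ∀ j ∈ Finset.univ (α := Fin d),
      0 ≤ hfun q d β c₁ c₂ (fun k => condRootProb q d m β (fun f => τ (Fin.cons j (Fin.cons k f)))) := by
    intro j _
    rw [hfun_eq_s10 q d β hβ0 c₁ c₂ _ (hg j)]
    apply div_nonneg
    · exact add_nonneg (mul_nonneg hβ0.le (hg j c₁).le)
        (Finset.sum_nonneg fun c _ => (hg j c).le)
    · exact add_nonneg (mul_nonneg hβ0.le (hg j c₂).le)
        (Finset.sum_nonneg fun c _ => (hg j c).le)
  calc ∏ j : Fin d, hfun q d β c₁ c₂ (fun k => condRootProb q d m β (fun f => τ (Fin.cons j (Fin.cons k f))))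
      ≤ ∏ _j : Fin d, Mval q d α β c₁ c₂ := Finset.prod_le_prod hfnn hfle
    _ = Mval q d α β c₁ c₂ ^ d := by
        rw [Finset.prod_const, Finset.card_univ, Fintype.card_fin]

end PottsAux
/-- If `γ(q,β,d,n-2) = α` for some `n ≥ 3` and `α > 1`, and `M_{α,c₁,c₂,β} < α^{1/d}`
for all colours `c₁, c₂`, then
`γ(q,β,d,n) ≤ max_{c₁,c₂} (M_{α,c₁,c₂,β})^d < γ(q,β,d,n-2)`. -/
theorem potts_gamma_decreasing (q d : ℕ) (hq : 3 ≤ q) (hd : 2 ≤ d)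
    (β : ℝ) (hβ0 : 0 < β) (hβ1 : β < 1)
    (n : ℕ) (hn : 3 ≤ n) (α : ℝ) (hα : 1 < α)
    (hγ : pottsGamma q d β (n - 2) = α)
    (hM : ∀ c₁ c₂ : Fin q, Mval q d α β c₁ c₂ < α ^ (1 / (d : ℝ))) :
    pottsGamma q d β n ≤ (⨆ c₁ : Fin q, ⨆ c₂ : Fin q, (Mval q d α β c₁ c₂) ^ d) ∧
    (⨆ c₁ : Fin q, ⨆ c₂ : Fin q, (Mval q d α β c₁ c₂) ^ d) < pottsGamma q d β (n - 2) := by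
  open PottsAux in
  obtain ⟨m, rfl⟩ : ∃ m, n = m + 2 := ⟨n - 2, by omega⟩
  have hm : 0 < m := by omega
  have hn2 : (m + 2) - 2 = m := by omega
  rw [hn2] at hγ ⊢
  have hq0 : 0 < q := by omega
  have hα0 : (0:ℝ) < α := by linarith
  have hα1 : (1:ℝ) ≤ α := hα.le
  haveI : Nonempty (Fin q) := ⟨⟨0, hq0⟩⟩
  have hMnn : ∀ c₁ c₂ : Fin q, (0:ℝ) ≤ Mval q d α β c₁ c₂ := fun c₁ c₂ =>
    le_trans zero_le_one (one_le_Mval q d hq0 β α hβ0 hβ1.le hα1 c₁ c₂)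
  have hdr : ((α : ℝ) ^ (1 / (d:ℝ))) ^ d = α := by
    rw [← Real.rpow_natCast (α ^ (1 / (d:ℝ))) d, ← Real.rpow_mul hα0.le]
    rw [one_div, inv_mul_cancel₀ (by exact_mod_cast (by omega : d ≠ 0) : (d:ℝ) ≠ 0)]
    exact Real.rpow_one α
  have hMd : ∀ c₁ c₂ : Fin q, Mval q d α β c₁ c₂ ^ d < α := by
    intro c₁ c₂
    calc Mval q d α β c₁ c₂ ^ d < (α ^ (1/(d:ℝ)))^d :=
          pow_lt_pow_left₀ (hM c₁ c₂) (hMnn c₁ c₂) (by omega)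
      _ = α := hdr
  have hSlt : (⨆ c₁ : Fin q, ⨆ c₂ : Fin q, Mval q d α β c₁ c₂ ^ d) < α := by
    obtain ⟨c₁, hc₁⟩ := exists_eq_ciSup_of_finite
      (f := fun c₁ : Fin q => ⨆ c₂ : Fin q, Mval q d α β c₁ c₂ ^ d)
    rw [← hc₁]
    obtain ⟨c₂, hc₂⟩ := exists_eq_ciSup_of_finite
      (f := fun c₂ : Fin q => Mval q d α β c₁ c₂ ^ d)
    rw [← hc₂]
    exact hMd c₁ c₂
  constructor
  · apply ciSup_le
    intro τ
    apply ciSup_le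
    intro c₁
    apply ciSup_le
    intro c₂
    calc condRootProb q d (m+2) β τ c₁ / condRootProb q d (m+2) β τ c₂
        ≤ Mval q d α β c₁ c₂ ^ d :=
          ratio_le_Mval_pow q d m hq0 β α hβ0 hβ1 hα1 hm hγ τ c₁ c₂
      _ ≤ ⨆ c₂' : Fin q, Mval q d α β c₁ c₂' ^ d :=
          le_ciSup (f := fun c₂' : Fin q => Mval q d α β c₁ c₂' ^ d)
            (Set.finite_range _).bddAbove c₂
      _ ≤ ⨆ c₁' : Fin q, ⨆ c₂' : Fin q, Mval q d α β c₁' c₂' ^ d :=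
          le_ciSup (f := fun c₁' : Fin q => ⨆ c₂' : Fin q, Mval q d α β c₁' c₂' ^ d)
            (Set.finite_range _).bddAbove c₁
  · rw [hγ]
    exact hSlt
end

section
/- Fix d ≥ 2 and fix real x, y with 0 ≤ y ≤ x ≤ 1, 2y + x ≤ 1 and 1 ≤ 2x + y. Then β ↦ f_u(d,β,x,y) is a decreasing function of β on the interval (0,1), and β ↦ f_ℓ(d,β,x,y) is an increasing function of β on the interval (0,1). -/
open Filter

lemma key_aux (u v t₁ t₂ : ℝ) (hv : v ≤ u) (ht : t₂ ≤ t₁) :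
    (1 - t₁ * u) * (1 - t₂ * v) ≤ (1 - t₂ * u) * (1 - t₁ * v) := by
  nlinarith [mul_nonneg (sub_nonneg.2 ht) (sub_nonneg.2 hv)]

lemma sq_rpow_half (a : ℝ) (ha : 0 ≤ a) (d : ℕ) :
    (a ^ 2) ^ ((d : ℝ) / 2) = a ^ d := by
  rw [← Real.rpow_natCast a 2, ← Real.rpow_mul ha]
  have h : ((2 : ℕ) : ℝ) * ((d : ℝ) / 2) = (d : ℝ) := by push_cast; ring
  rw [h, Real.rpow_natCast]

/-- For fixed `d ≥ 2` and fixed `x, y` with `0 ≤ y ≤ x ≤ 1`, `2y + x ≤ 1 ≤ 2x + y`: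
`β ↦ f_u(d,β,x,y)` is decreasing and `β ↦ f_ℓ(d,β,x,y)` is increasing on `(0,1)`. -/
theorem fU_fL_monotone_in_beta (d : ℕ) (hd : 2 ≤ d) (x y : ℝ)
    (h0y : 0 ≤ y) (hyx : y ≤ x) (hx1 : x ≤ 1)
    (hsum1 : 2 * y + x ≤ 1) (hsum2 : 1 ≤ 2 * x + y) :
    AntitoneOn (fun β : ℝ => fU d β x y) (Set.Ioo 0 1) ∧
    MonotoneOn (fun β : ℝ => fL d β x y) (Set.Ioo 0 1) := by
  have h0x : 0 ≤ x := le_trans h0y hyx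
  have hy1 : y ≤ 1 := le_trans hyx hx1
  have hq0 : 0 ≤ 1 - x - y := by linarith
  have hq1 : 1 - x - y ≤ 1 := by linarith
  have hyq : y ≤ 1 - x - y := by linarith
  have hqx : 1 - x - y ≤ x := by linarith
  have hposz : ∀ β ∈ Set.Ioo (0:ℝ) 1, ∀ z : ℝ, 0 ≤ z → z ≤ 1 → 0 < 1 - (1 - β) * z := by
    rintro β ⟨hβ0, hβ1⟩ z hz0 hz1; nlinarith
  constructor
  · -- fU antitone
    intro β₁ hβ₁ β₂ hβ₂ h12
    have ha₁ : 0 < 1 - (1 - β₁) * y := hposz β₁ hβ₁ y h0y hy1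
    have ha₂ : 0 < 1 - (1 - β₂) * y := hposz β₂ hβ₂ y h0y hy1
    have hb₁ : 0 < 1 - (1 - β₁) * x := hposz β₁ hβ₁ x h0x hx1
    have hb₂ : 0 < 1 - (1 - β₂) * x := hposz β₂ hβ₂ x h0x hx1
    have hc₁ : 0 < 1 - (1 - β₁) * (1 - x - y) := hposz β₁ hβ₁ _ hq0 hq1
    have hc₂ : 0 < 1 - (1 - β₂) * (1 - x - y) := hposz β₂ hβ₂ _ hq0 hq1
    set a₁ := 1 - (1 - β₁) * y
    set a₂ := 1 - (1 - β₂) * y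
    set b₁ := 1 - (1 - β₁) * x
    set b₂ := 1 - (1 - β₂) * x
    set c₁ := 1 - (1 - β₁) * (1 - x - y)
    set c₂ := 1 - (1 - β₂) * (1 - x - y)
    set r : ℝ := (d : ℝ) / 2 with hr
    have hD₁ : 0 < a₁ ^ d + 2 * b₁ ^ r * c₁ ^ r :=
      add_pos (pow_pos ha₁ d)
        (mul_pos (mul_pos two_pos (Real.rpow_pos_of_pos hb₁ r)) (Real.rpow_pos_of_pos hc₁ r))
    have hD₂ : 0 < a₂ ^ d + 2 * b₂ ^ r * c₂ ^ r :=
      add_pos (pow_pos ha₂ d)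
        (mul_pos (mul_pos two_pos (Real.rpow_pos_of_pos hb₂ r)) (Real.rpow_pos_of_pos hc₂ r))
    show fU d β₂ x y ≤ fU d β₁ x y
    rw [fU, fU, div_le_div_iff₀ hD₂ hD₁]
    have k1 : b₁ * a₂ ≤ b₂ * a₁ := key_aux x y (1 - β₁) (1 - β₂) hyx (by linarith)
    have k2 : c₁ * a₂ ≤ c₂ * a₁ := key_aux (1 - x - y) y (1 - β₁) (1 - β₂) hyq (by linarith)
    have kp : a₂ ^ 2 * (b₁ * c₁) ≤ a₁ ^ 2 * (b₂ * c₂) := by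
      nlinarith [mul_le_mul k1 k2 (mul_nonneg hc₁.le ha₂.le) (mul_nonneg hb₂.le ha₁.le)]
    have kr : (a₂ ^ 2 * (b₁ * c₁)) ^ r ≤ (a₁ ^ 2 * (b₂ * c₂)) ^ r :=
      Real.rpow_le_rpow (by positivity) kp (by positivity)
    have e₂ : (a₂ ^ 2 * (b₁ * c₁)) ^ r = a₂ ^ d * (b₁ ^ r * c₁ ^ r) := by
      rw [Real.mul_rpow (sq_nonneg _) (mul_nonneg hb₁.le hc₁.le),
        Real.mul_rpow hb₁.le hc₁.le, sq_rpow_half _ ha₂.le]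
    have e₁ : (a₁ ^ 2 * (b₂ * c₂)) ^ r = a₁ ^ d * (b₂ ^ r * c₂ ^ r) := by
      rw [Real.mul_rpow (sq_nonneg _) (mul_nonneg hb₂.le hc₂.le),
        Real.mul_rpow hb₂.le hc₂.le, sq_rpow_half _ ha₁.le]
    rw [e₁, e₂] at kr
    nlinarith [kr]
  · -- fL monotone
    intro β₁ hβ₁ β₂ hβ₂ h12
    have ha₁ : 0 < 1 - (1 - β₁) * y := hposz β₁ hβ₁ y h0y hy1
    have ha₂ : 0 < 1 - (1 - β₂) * y := hposz β₂ hβ₂ y h0y hy1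
    have hb₁ : 0 < 1 - (1 - β₁) * x := hposz β₁ hβ₁ x h0x hx1
    have hb₂ : 0 < 1 - (1 - β₂) * x := hposz β₂ hβ₂ x h0x hx1
    have hc₁ : 0 < 1 - (1 - β₁) * (1 - x - y) := hposz β₁ hβ₁ _ hq0 hq1
    have hc₂ : 0 < 1 - (1 - β₂) * (1 - x - y) := hposz β₂ hβ₂ _ hq0 hq1
    set a₁ := 1 - (1 - β₁) * y
    set a₂ := 1 - (1 - β₂) * y
    set b₁ := 1 - (1 - β₁) * x
    set b₂ := 1 - (1 - β₂) * x
    set c₁ := 1 - (1 - β₁) * (1 - x - y)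
    set c₂ := 1 - (1 - β₂) * (1 - x - y)
    have hD₁ : 0 < b₁ ^ d + a₁ ^ d + c₁ ^ d :=
      add_pos (add_pos (pow_pos hb₁ d) (pow_pos ha₁ d)) (pow_pos hc₁ d)
    have hD₂ : 0 < b₂ ^ d + a₂ ^ d + c₂ ^ d :=
      add_pos (add_pos (pow_pos hb₂ d) (pow_pos ha₂ d)) (pow_pos hc₂ d)
    show fL d β₁ x y ≤ fL d β₂ x y
    rw [fL, fL, div_le_div_iff₀ hD₁ hD₂]
    have k1 : b₁ * a₂ ≤ b₂ * a₁ := key_aux x y (1 - β₁) (1 - β₂) hyx (by linarith)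
    have k3 : b₁ * c₂ ≤ b₂ * c₁ := key_aux x (1 - x - y) (1 - β₁) (1 - β₂) hqx (by linarith)
    have p1 : b₁ ^ d * a₂ ^ d ≤ b₂ ^ d * a₁ ^ d := by
      rw [← mul_pow, ← mul_pow]
      exact pow_le_pow_left₀ (mul_nonneg hb₁.le ha₂.le) k1 d
    have p3 : b₁ ^ d * c₂ ^ d ≤ b₂ ^ d * c₁ ^ d := by
      rw [← mul_pow, ← mul_pow]
      exact pow_le_pow_left₀ (mul_nonneg hb₁.le hc₂.le) k3 d
    nlinarith [p1, p3]
end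

section
/- Fix d ≥ 2 and 0 < β ≤ 1. Then (1) x ↦ f_ℓ(d,β,x,y) is a decreasing function of x for x, y ∈ [0,1]; and (2) y ↦ f_ℓ(d,β,x,y) is an increasing function of y on the region where x + 2y ≤ 1 and x, y ∈ [0,1]. -/
open Filter

lemma fL_aux_pow (d : ℕ) {u1 u2 v1 v2 : ℝ} (hv1 : 0 ≤ v1) (h12 : v1 ≤ v2)
    (hvu : v2 ≤ u2) (hu : u2 ≤ u1) (hsum : u1 + v1 = u2 + v2) :
    u2 ^ d + v2 ^ d ≤ u1 ^ d + v1 ^ d := by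
  have key : v2 ^ d - v1 ^ d ≤ u1 ^ d - u2 ^ d := by
    rw [← geom_sum₂_mul, ← geom_sum₂_mul]
    have hdiff : v2 - v1 = u1 - u2 := by linarith
    rw [hdiff]
    apply mul_le_mul_of_nonneg_right _ (by linarith)
    apply Finset.sum_le_sum
    intro i _
    exact mul_le_mul (pow_le_pow_left₀ (by linarith) (by linarith) _)
      (pow_le_pow_left₀ hv1 (by linarith) _) (pow_nonneg hv1 _)
      (pow_nonneg (by linarith) _)
  linarith

set_option maxHeartbeats 2000000 in
/-- For fixed `d ≥ 2` and `0 < β ≤ 1`: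
(1) `x ↦ f_ℓ(d,β,x,y)` is decreasing for `x, y ∈ [0,1]`, and
(2) `y ↦ f_ℓ(d,β,x,y)` is increasing on the region `x + 2y ≤ 1`, `x, y ∈ [0,1]`. -/
theorem fL_monotone_in_x_y (d : ℕ) (hd : 2 ≤ d) (β : ℝ) (hβ0 : 0 < β) (hβ1 : β ≤ 1) :
    (∀ y ∈ Set.Icc (0 : ℝ) 1, AntitoneOn (fun x : ℝ => fL d β x y) (Set.Icc 0 1)) ∧
    (∀ x ∈ Set.Icc (0 : ℝ) 1, MonotoneOn (fun y : ℝ => fL d β x y)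
      {y : ℝ | y ∈ Set.Icc (0 : ℝ) 1 ∧ x + 2 * y ≤ 1}) := by
  have ht0 : (0:ℝ) ≤ 1 - β := by linarith
  have hbase : ∀ z : ℝ, z ≤ 1 → 0 < 1 - (1 - β) * z := by
    intro z hz
    nlinarith [mul_le_mul_of_nonneg_left hz ht0]
  constructor
  · intro y hy x1 hx1 x2 hx2 hle
    simp only [Set.mem_Icc] at hx1 hx2 hy
    simp only [fL]
    set A1 := (1 - (1 - β) * x1) ^ d with hA1
    set A2 := (1 - (1 - β) * x2) ^ d with hA2
    set B := (1 - (1 - β) * y) ^ d with hB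
    set C1 := (1 - (1 - β) * (1 - x1 - y)) ^ d with hC1
    set C2 := (1 - (1 - β) * (1 - x2 - y)) ^ d with hC2
    have hA1p : 0 < A1 := pow_pos (hbase _ (by linarith)) d
    have hA2p : 0 < A2 := pow_pos (hbase _ (by linarith)) d
    have hBp : 0 < B := pow_pos (hbase _ (by linarith)) d
    have hC1p : 0 < C1 := pow_pos (hbase _ (by nlinarith)) d
    have hC2p : 0 < C2 := pow_pos (hbase _ (by nlinarith)) d
    have hA : A2 ≤ A1 := by
      apply pow_le_pow_left₀ (le_of_lt (hbase _ (by linarith)))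
      nlinarith
    have hC : C1 ≤ C2 := by
      apply pow_le_pow_left₀ (le_of_lt (hbase _ (by nlinarith)))
      nlinarith
    rw [div_le_div_iff₀ (by linarith) (by linarith)]
    nlinarith [mul_le_mul hA hC hC1p.le hA1p.le, mul_le_mul_of_nonneg_right hA hBp.le]
  · intro x hx y1 hy1 y2 hy2 hle
    obtain ⟨hy1m, hy1r⟩ := hy1
    obtain ⟨hy2m, hy2r⟩ := hy2
    simp only [Set.mem_Icc] at hx hy1m hy2m
    simp only [fL]
    set A := (1 - (1 - β) * x) ^ d with hA
    set B1 := (1 - (1 - β) * y1) ^ d with hB1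
    set B2 := (1 - (1 - β) * y2) ^ d with hB2
    set C1 := (1 - (1 - β) * (1 - x - y1)) ^ d with hC1
    set C2 := (1 - (1 - β) * (1 - x - y2)) ^ d with hC2
    have hAp : 0 < A := pow_pos (hbase _ (by linarith)) d
    have hB1p : 0 < B1 := pow_pos (hbase _ (by linarith)) d
    have hB2p : 0 < B2 := pow_pos (hbase _ (by linarith)) d
    have hC1p : 0 < C1 := pow_pos (hbase _ (by nlinarith)) d
    have hC2p : 0 < C2 := pow_pos (hbase _ (by nlinarith)) d
    have hsum : B2 + C2 ≤ B1 + C1 := by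
      apply fL_aux_pow d
      · exact (hbase _ (by nlinarith)).le
      · nlinarith
      · nlinarith
      · nlinarith
      · ring
    rw [div_le_div_iff₀ (by linarith) (by linarith)]
    nlinarith [mul_le_mul_of_nonneg_left hsum hAp.le]
end

section
/- Fix d ≥ 2 and 0 < β ≤ 1. Then (1) x ↦ f_u(d,β,x,y) is an increasing function of x on the region where 1 ≤ 2x + y and x, y ∈ [0,1]; and (2) y ↦ f_u(d,β,x,y) is a decreasing function of y for x, y ∈ [0,1]. -/
open Filter

/-- For fixed `d ≥ 2` and `0 < β ≤ 1`:
(1) `x ↦ f_u(d,β,x,y)` is increasing on the region `1 ≤ 2x + y`, `x, y ∈ [0,1]`, and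
(2) `y ↦ f_u(d,β,x,y)` is decreasing for `x, y ∈ [0,1]`. -/
theorem fU_monotone_in_x_y (d : ℕ) (hd : 2 ≤ d) (β : ℝ) (hβ0 : 0 < β) (hβ1 : β ≤ 1) :
    (∀ y ∈ Set.Icc (0 : ℝ) 1, MonotoneOn (fun x : ℝ => fU d β x y)
      {x : ℝ | x ∈ Set.Icc (0 : ℝ) 1 ∧ 1 ≤ 2 * x + y}) ∧
    (∀ x ∈ Set.Icc (0 : ℝ) 1, AntitoneOn (fun y : ℝ => fU d β x y) (Set.Icc 0 1)) := by
  have hc0 : (0:ℝ) ≤ 1 - β := by linarith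
  have hinner : ∀ t : ℝ, t ≤ 1 → 0 < 1 - (1 - β) * t := by
    intro t ht
    nlinarith [mul_le_mul_of_nonneg_left ht hc0]
  have hr : (0:ℝ) ≤ (d:ℝ)/2 := by positivity
  constructor
  · intro y hy x1 hx1 x2 hx2 hle
    obtain ⟨⟨hx10, hx11⟩, hs1⟩ := hx1
    obtain ⟨⟨hx20, hx21⟩, hs2⟩ := hx2
    obtain ⟨hy0, hy1⟩ := hy
    have hb1 := hinner x1 hx11
    have hb2 := hinner x2 hx21
    have he1 := hinner (1 - x1 - y) (by linarith)
    have he2 := hinner (1 - x2 - y) (by linarith)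
    have hA : 0 < (1 - (1 - β) * y) ^ d := pow_pos (hinner y hy1) d
    have hE : 2 * (1-(1-β)*x2)^((d:ℝ)/2) * (1-(1-β)*(1-x2-y))^((d:ℝ)/2) ≤
        2 * (1-(1-β)*x1)^((d:ℝ)/2) * (1-(1-β)*(1-x1-y))^((d:ℝ)/2) := by
      rw [mul_assoc, mul_assoc, ← Real.mul_rpow hb2.le he2.le, ← Real.mul_rpow hb1.le he1.le]
      have key : (1-(1-β)*x2)*(1-(1-β)*(1-x2-y)) ≤ (1-(1-β)*x1)*(1-(1-β)*(1-x1-y)) := by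
        nlinarith [mul_nonneg (mul_nonneg (sub_nonneg.2 hle)
          (by linarith : (0:ℝ) ≤ x1+x2+y-1)) (sq_nonneg (1-β))]
      have := Real.rpow_le_rpow (mul_nonneg hb2.le he2.le) key hr
      linarith
    have hE2 : 0 ≤ 2 * (1-(1-β)*x2)^((d:ℝ)/2) * (1-(1-β)*(1-x2-y))^((d:ℝ)/2) :=
      mul_nonneg (mul_nonneg (by norm_num) (Real.rpow_nonneg hb2.le _))
        (Real.rpow_nonneg he2.le _)
    simp only [fU]
    rw [div_le_div_iff₀ (by linarith) (by linarith)]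
    nlinarith [mul_le_mul_of_nonneg_left hE hA.le]
  · intro x hx y1 hy1 y2 hy2 hle
    obtain ⟨hx0, hx1⟩ := hx
    obtain ⟨hy10, hy11⟩ := hy1
    obtain ⟨hy20, hy21⟩ := hy2
    have ha1 := hinner y1 hy11
    have ha2 := hinner y2 hy21
    have hb := hinner x hx1
    have he1 := hinner (1 - x - y1) (by linarith)
    have he2 := hinner (1 - x - y2) (by linarith)
    have hA1 : 0 < (1 - (1 - β) * y1) ^ d := pow_pos ha1 d
    have hA2 : 0 < (1 - (1 - β) * y2) ^ d := pow_pos ha2 d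
    have hA21 : (1 - (1 - β) * y2) ^ d ≤ (1 - (1 - β) * y1) ^ d := by
      apply pow_le_pow_left₀ ha2.le
      nlinarith [mul_le_mul_of_nonneg_left hle hc0]
    have hC12 : (1-(1-β)*(1-x-y1))^((d:ℝ)/2) ≤ (1-(1-β)*(1-x-y2))^((d:ℝ)/2) := by
      apply Real.rpow_le_rpow he1.le _ hr
      nlinarith [mul_le_mul_of_nonneg_left hle hc0]
    have hBnn : 0 ≤ (1-(1-β)*x)^((d:ℝ)/2) := Real.rpow_nonneg hb.le _
    have hE12 : 2 * (1-(1-β)*x)^((d:ℝ)/2) * (1-(1-β)*(1-x-y1))^((d:ℝ)/2) ≤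
        2 * (1-(1-β)*x)^((d:ℝ)/2) * (1-(1-β)*(1-x-y2))^((d:ℝ)/2) :=
      mul_le_mul_of_nonneg_left hC12 (by positivity)
    have hE1nn : 0 ≤ 2 * (1-(1-β)*x)^((d:ℝ)/2) * (1-(1-β)*(1-x-y1))^((d:ℝ)/2) :=
      mul_nonneg (by positivity) (Real.rpow_nonneg he1.le _)
    simp only [fU]
    rw [div_le_div_iff₀ (by nlinarith) (by nlinarith)]
    nlinarith [mul_le_mul hA21 hE12 hE1nn hA1.le]
end

section
/- For any fixed d ≥ 2, 0 < β < 1 and 0 ≤ y ≤ x ≤ 1 such that 2y + x ≤ 1 ≤ 2x + y, we have 2·f_ℓ(d,β,x,y) + f_u(d,β,x,y) ≤ 1 ≤ 2·f_u(d,β,x,y) + f_ℓ(d,β,x,y). -/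
open Filter

set_option maxHeartbeats 1000000 in
/-- For any `d ≥ 2`, `0 < β < 1` and `0 ≤ y ≤ x ≤ 1` with `2y + x ≤ 1 ≤ 2x + y`:
`2 f_ℓ(d,β,x,y) + f_u(d,β,x,y) ≤ 1 ≤ 2 f_u(d,β,x,y) + f_ℓ(d,β,x,y)`. -/
theorem fL_fU_range (d : ℕ) (hd : 2 ≤ d) (β : ℝ) (hβ0 : 0 < β) (hβ1 : β < 1)
    (x y : ℝ) (h0y : 0 ≤ y) (hyx : y ≤ x) (hx1 : x ≤ 1)
    (hsum1 : 2 * y + x ≤ 1) (hsum2 : 1 ≤ 2 * x + y) :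
    2 * fL d β x y + fU d β x y ≤ 1 ∧ 1 ≤ 2 * fU d β x y + fL d β x y := by
  have hβ' : 0 ≤ 1 - β := by linarith
  set a := 1 - (1 - β) * x with ha
  set b := 1 - (1 - β) * y with hb
  set c := 1 - (1 - β) * (1 - x - y) with hc
  have ha0 : 0 < a := by nlinarith
  have hb0 : 0 < b := by nlinarith
  have hc0 : 0 < c := by nlinarith
  have hac : a ≤ c := by nlinarith
  have hcb : c ≤ b := by nlinarith
  set m := a ^ ((d : ℝ) / 2) * c ^ ((d : ℝ) / 2) with hm
  have hm0 : 0 < m := by positivity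
  have half : (d : ℝ) / 2 + (d : ℝ) / 2 = (d : ℝ) := by ring
  have hasq : a ^ ((d : ℝ) / 2) * a ^ ((d : ℝ) / 2) = a ^ d := by
    rw [← Real.rpow_add ha0, half, Real.rpow_natCast]
  have hcsq : c ^ ((d : ℝ) / 2) * c ^ ((d : ℝ) / 2) = c ^ d := by
    rw [← Real.rpow_add hc0, half, Real.rpow_natCast]
  have hmA : a ^ d ≤ m := by
    rw [← hasq, hm]
    exact mul_le_mul_of_nonneg_left
      (Real.rpow_le_rpow ha0.le hac (by positivity)) (by positivity)
  have hm2 : 2 * m ≤ a ^ d + c ^ d := by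
    nlinarith [sq_nonneg (a ^ ((d : ℝ) / 2) - c ^ ((d : ℝ) / 2))]
  have hA : 0 < a ^ d := pow_pos ha0 d
  have hB : 0 < b ^ d := pow_pos hb0 d
  have hC : 0 < c ^ d := pow_pos hc0 d
  have hAC : a ^ d ≤ c ^ d := pow_le_pow_left₀ ha0.le hac d
  have hCB : c ^ d ≤ b ^ d := pow_le_pow_left₀ hc0.le hcb d
  have hS : 0 < a ^ d + b ^ d + c ^ d := by positivity
  have hD : 0 < b ^ d + 2 * m := by positivity
  have hfU : fU d β x y = b ^ d / (b ^ d + 2 * m) := by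
    rw [fU, hm, ha, hb, hc]; ring
  have hfL : fL d β x y = a ^ d / (a ^ d + b ^ d + c ^ d) := by
    rw [fL, ha, hb, hc]
  rw [hfU, hfL]
  constructor
  · have heq : 2 * (a ^ d / (a ^ d + b ^ d + c ^ d)) + b ^ d / (b ^ d + 2 * m) =
        (2 * a ^ d * (b ^ d + 2 * m) + b ^ d * (a ^ d + b ^ d + c ^ d)) /
          ((a ^ d + b ^ d + c ^ d) * (b ^ d + 2 * m)) := by
      field_simp
    rw [heq, div_le_one (by positivity)]
    nlinarith [mul_nonneg (sub_nonneg.2 hmA) hB.le,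
      mul_nonneg hm0.le (sub_nonneg.2 hAC)]
  · have heq : 2 * (b ^ d / (b ^ d + 2 * m)) + a ^ d / (a ^ d + b ^ d + c ^ d) =
        (2 * b ^ d * (a ^ d + b ^ d + c ^ d) + a ^ d * (b ^ d + 2 * m)) /
          ((b ^ d + 2 * m) * (a ^ d + b ^ d + c ^ d)) := by
      field_simp
    rw [heq, le_div_iff₀ (by positivity), one_mul]
    have h1 : 0 ≤ (a ^ d + c ^ d - 2 * m) * (b ^ d + c ^ d) :=
      mul_nonneg (by linarith) (by positivity)
    have h2 : 0 ≤ a ^ d * (b ^ d - c ^ d) := mul_nonneg hA.le (by linarith)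
    have h3 : 0 ≤ (b ^ d - c ^ d) * (b ^ d + c ^ d) :=
      mul_nonneg (by linarith) (by positivity)
    nlinarith [h1, h2, h3]
end

section
/- For any fixed d ≥ 2, 0 < β < 1 and every natural number n, the sequences u_n(d,β) and ℓ_n(d,β) satisfy: (1) u_n(d,β) ≥ u_{n+1}(d,β); (2) ℓ_n(d,β) ≤ ℓ_{n+1}(d,β); and (3) 2·ℓ_n(d,β) + u_n(d,β) ≤ 1 ≤ 2·u_n(d,β) + ℓ_n(d,β). -/
open Filter

section ulAux

/-- The invariant region. -/
private def Pinv (x y : ℝ) : Prop := 0 ≤ y ∧ x ≤ 1 ∧ 2 * y + x ≤ 1 ∧ 1 ≤ 2 * x + y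

private lemma aux_pos {β s : ℝ} (hβ0 : 0 < β) (hβ1 : β < 1) (hs : s ≤ 1) :
    0 < 1 - (1 - β) * s := by nlinarith

/-- Key pairing lemma: if `b + c = b' + c'` with `c ≤ c' ≤ b' ≤ b` and `0 ≤ c`,
then `b'^d + c'^d ≤ b^d + c^d`. -/
private lemma pow_pair_le {b b' c c' : ℝ} (d : ℕ) (hc0 : 0 ≤ c) (hcc : c ≤ c')
    (hcb : c' ≤ b') (hbb : b' ≤ b) (hsum : b + c = b' + c') :
    b' ^ d + c' ^ d ≤ b ^ d + c ^ d := by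
  have hc'0 : 0 ≤ c' := hc0.trans hcc
  have hb'0 : 0 ≤ b' := hc'0.trans hcb
  have hb0 : 0 ≤ b := hb'0.trans hbb
  have e1 : (∑ i ∈ Finset.range d, b ^ i * b' ^ (d - 1 - i)) * (b - b') = b ^ d - b' ^ d :=
    geom_sum₂_mul b b' d
  have e2 : (∑ i ∈ Finset.range d, c' ^ i * c ^ (d - 1 - i)) * (c' - c) = c' ^ d - c ^ d :=
    geom_sum₂_mul c' c d
  have hS : (∑ i ∈ Finset.range d, c' ^ i * c ^ (d - 1 - i)) ≤
      (∑ i ∈ Finset.range d, b ^ i * b' ^ (d - 1 - i)) := by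
    refine Finset.sum_le_sum fun i _ => ?_
    exact mul_le_mul (pow_le_pow_left₀ hc'0 (hcb.trans hbb) i)
      (pow_le_pow_left₀ hc0 (hcc.trans hcb) _) (pow_nonneg hc0 _) (pow_nonneg hb0 _)
  have hdiff : c' - c = b - b' := by linarith
  have key : (∑ i ∈ Finset.range d, c' ^ i * c ^ (d - 1 - i)) * (c' - c) ≤
      (∑ i ∈ Finset.range d, b ^ i * b' ^ (d - 1 - i)) * (b - b') := by
    rw [hdiff]
    exact mul_le_mul_of_nonneg_right hS (by linarith)
  rw [e1, e2] at key
  linarith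

/-- `fU` is antitone in `y`. -/
private lemma fU_anti_y {d : ℕ} {β x y y' : ℝ} (hβ0 : 0 < β) (hβ1 : β < 1)
    (hx0 : 0 ≤ x) (hx1 : x ≤ 1) (hy0 : 0 ≤ y) (hyy : y ≤ y') (hy1 : y' ≤ 1) :
    fU d β x y' ≤ fU d β x y := by
  have h1β : (0:ℝ) ≤ 1 - β := by linarith
  have ha : 0 < 1 - (1 - β) * x := aux_pos hβ0 hβ1 hx1
  have hb' : 0 < 1 - (1 - β) * y' := aux_pos hβ0 hβ1 hy1
  have hb : 0 < 1 - (1 - β) * y := aux_pos hβ0 hβ1 (hyy.trans hy1)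
  have hc : 0 < 1 - (1 - β) * (1 - x - y) := aux_pos hβ0 hβ1 (by linarith)
  have hc' : 0 < 1 - (1 - β) * (1 - x - y') := aux_pos hβ0 hβ1 (by linarith)
  have hbb : 1 - (1 - β) * y' ≤ 1 - (1 - β) * y := by nlinarith
  have hcc : 1 - (1 - β) * (1 - x - y) ≤ 1 - (1 - β) * (1 - x - y') := by nlinarith
  have hD2 : (0:ℝ) ≤ (d : ℝ) / 2 := by positivity
  have hX : 0 < (1 - (1 - β) * x) ^ ((d : ℝ) / 2) := Real.rpow_pos_of_pos ha _
  have hC : 0 < (1 - (1 - β) * (1 - x - y)) ^ ((d : ℝ) / 2) := Real.rpow_pos_of_pos hc _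
  have hC' : 0 < (1 - (1 - β) * (1 - x - y')) ^ ((d : ℝ) / 2) := Real.rpow_pos_of_pos hc' _
  have hCle : (1 - (1 - β) * (1 - x - y)) ^ ((d : ℝ) / 2) ≤
      (1 - (1 - β) * (1 - x - y')) ^ ((d : ℝ) / 2) := Real.rpow_le_rpow hc.le hcc hD2
  unfold fU
  rw [div_le_div_iff₀ (by positivity) (by positivity)]
  have hkey : (1 - (1 - β) * y') ^ d *
        ((1 - (1 - β) * x) ^ ((d : ℝ) / 2) * (1 - (1 - β) * (1 - x - y)) ^ ((d : ℝ) / 2)) ≤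
      (1 - (1 - β) * y) ^ d *
        ((1 - (1 - β) * x) ^ ((d : ℝ) / 2) * (1 - (1 - β) * (1 - x - y')) ^ ((d : ℝ) / 2)) :=
    mul_le_mul (pow_le_pow_left₀ hb'.le hbb d)
      (mul_le_mul_of_nonneg_left hCle hX.le) (by positivity) (by positivity)
  nlinarith [hkey]

/-- `fU` is monotone in `x` on the region `1 ≤ 2x' + y`. -/
private lemma fU_mono_x {d : ℕ} {β x x' y : ℝ} (hβ0 : 0 < β) (hβ1 : β < 1)
    (hy0 : 0 ≤ y) (hy1 : y ≤ 1) (hx'0 : 0 ≤ x') (hxx : x' ≤ x) (hx1 : x ≤ 1)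
    (hreg : 1 ≤ 2 * x' + y) :
    fU d β x' y ≤ fU d β x y := by
  have h1β : (0:ℝ) ≤ 1 - β := by linarith
  have ha : 0 < 1 - (1 - β) * x := aux_pos hβ0 hβ1 hx1
  have ha' : 0 < 1 - (1 - β) * x' := aux_pos hβ0 hβ1 (hxx.trans hx1)
  have hb : 0 < 1 - (1 - β) * y := aux_pos hβ0 hβ1 hy1
  have hc : 0 < 1 - (1 - β) * (1 - x - y) := aux_pos hβ0 hβ1 (by linarith)
  have hc' : 0 < 1 - (1 - β) * (1 - x' - y) := aux_pos hβ0 hβ1 (by linarith)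
  -- a'c' ≥ ac
  have hac : (1 - (1 - β) * x) * (1 - (1 - β) * (1 - x - y)) ≤
      (1 - (1 - β) * x') * (1 - (1 - β) * (1 - x' - y)) := by
    have h1 : 0 ≤ (1 - β) * (x - x') := mul_nonneg h1β (by linarith)
    have h2 : 0 ≤ (1 - (1 - β) * (1 - x' - y)) - (1 - (1 - β) * x') + (1 - β) * (x - x') := by
      nlinarith
    nlinarith [mul_nonneg h1 h2]
  have hD2 : (0:ℝ) ≤ (d : ℝ) / 2 := by positivity
  have hmul : (1 - (1 - β) * x) ^ ((d : ℝ) / 2) * (1 - (1 - β) * (1 - x - y)) ^ ((d : ℝ) / 2)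
      = ((1 - (1 - β) * x) * (1 - (1 - β) * (1 - x - y))) ^ ((d : ℝ) / 2) :=
    (Real.mul_rpow ha.le hc.le).symm
  have hmul' : (1 - (1 - β) * x') ^ ((d : ℝ) / 2) * (1 - (1 - β) * (1 - x' - y)) ^ ((d : ℝ) / 2)
      = ((1 - (1 - β) * x') * (1 - (1 - β) * (1 - x' - y))) ^ ((d : ℝ) / 2) :=
    (Real.mul_rpow ha'.le hc'.le).symm
  have ht : (1 - (1 - β) * x) ^ ((d : ℝ) / 2) * (1 - (1 - β) * (1 - x - y)) ^ ((d : ℝ) / 2) ≤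
      (1 - (1 - β) * x') ^ ((d : ℝ) / 2) * (1 - (1 - β) * (1 - x' - y)) ^ ((d : ℝ) / 2) := by
    rw [hmul, hmul']
    exact Real.rpow_le_rpow (mul_pos ha hc).le hac hD2
  have htpos : 0 < (1 - (1 - β) * x) ^ ((d : ℝ) / 2) *
      (1 - (1 - β) * (1 - x - y)) ^ ((d : ℝ) / 2) :=
    mul_pos (Real.rpow_pos_of_pos ha _) (Real.rpow_pos_of_pos hc _)
  unfold fU
  rw [div_le_div_iff₀ (by positivity) (by positivity)]
  nlinarith [mul_le_mul_of_nonneg_left ht (pow_nonneg hb.le d)]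

/-- `fL` is antitone in `x`. -/
private lemma fL_anti_x {d : ℕ} {β x x' y : ℝ} (hβ0 : 0 < β) (hβ1 : β < 1)
    (hy0 : 0 ≤ y) (hy1 : y ≤ 1) (hx'0 : 0 ≤ x') (hxx : x' ≤ x) (hx1 : x ≤ 1) :
    fL d β x y ≤ fL d β x' y := by
  have h1β : (0:ℝ) ≤ 1 - β := by linarith
  have ha : 0 < 1 - (1 - β) * x := aux_pos hβ0 hβ1 hx1
  have ha' : 0 < 1 - (1 - β) * x' := aux_pos hβ0 hβ1 (hxx.trans hx1)
  have hb : 0 < 1 - (1 - β) * y := aux_pos hβ0 hβ1 hy1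
  have hc : 0 < 1 - (1 - β) * (1 - x - y) := aux_pos hβ0 hβ1 (by linarith)
  have hc' : 0 < 1 - (1 - β) * (1 - x' - y) := aux_pos hβ0 hβ1 (by linarith)
  have haa : 1 - (1 - β) * x ≤ 1 - (1 - β) * x' := by nlinarith
  have hcc : 1 - (1 - β) * (1 - x' - y) ≤ 1 - (1 - β) * (1 - x - y) := by nlinarith
  have hA : (1 - (1 - β) * x) ^ d ≤ (1 - (1 - β) * x') ^ d := pow_le_pow_left₀ ha.le haa d
  have hC : (1 - (1 - β) * (1 - x' - y)) ^ d ≤ (1 - (1 - β) * (1 - x - y)) ^ d :=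
    pow_le_pow_left₀ hc'.le hcc d
  unfold fL
  rw [div_le_div_iff₀ (by positivity) (by positivity)]
  nlinarith [mul_le_mul hA (by nlinarith [pow_nonneg hb.le d] :
      (1 - (1 - β) * y) ^ d + (1 - (1 - β) * (1 - x' - y)) ^ d ≤
      (1 - (1 - β) * y) ^ d + (1 - (1 - β) * (1 - x - y)) ^ d)
    (by positivity) (by positivity)]

/-- `fL` is monotone in `y` on the region `x + 2y' ≤ 1`. -/
private lemma fL_mono_y {d : ℕ} {β x y y' : ℝ} (hβ0 : 0 < β) (hβ1 : β < 1)
    (hx0 : 0 ≤ x) (hx1 : x ≤ 1) (hy0 : 0 ≤ y) (hyy : y ≤ y')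
    (hreg : x + 2 * y' ≤ 1) :
    fL d β x y ≤ fL d β x y' := by
  have h1β : (0:ℝ) ≤ 1 - β := by linarith
  have hy'1 : y' ≤ 1 := by linarith
  have ha : 0 < 1 - (1 - β) * x := aux_pos hβ0 hβ1 hx1
  have hb : 0 < 1 - (1 - β) * y := aux_pos hβ0 hβ1 (hyy.trans hy'1)
  have hb' : 0 < 1 - (1 - β) * y' := aux_pos hβ0 hβ1 hy'1
  have hc : 0 < 1 - (1 - β) * (1 - x - y) := aux_pos hβ0 hβ1 (by linarith)
  have hc' : 0 < 1 - (1 - β) * (1 - x - y') := aux_pos hβ0 hβ1 (by linarith)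
  have hkey : (1 - (1 - β) * y') ^ d + (1 - (1 - β) * (1 - x - y')) ^ d ≤
      (1 - (1 - β) * y) ^ d + (1 - (1 - β) * (1 - x - y)) ^ d := by
    refine pow_pair_le d hc.le (by nlinarith) (by nlinarith) (by nlinarith) (by ring)
  unfold fL
  rw [div_le_div_iff₀ (by positivity) (by positivity)]
  nlinarith [mul_le_mul_of_nonneg_left hkey (by positivity : (0:ℝ) ≤ (1 - (1 - β) * x) ^ d)]

/-- The two key fraction inequalities, with abstract atoms. -/
private lemma frac_ineqs {A B C t : ℝ} (hA : 0 < A) (hB : 0 < B) (hC : 0 < C)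
    (ht : 0 < t) (hAC : A ≤ C) (hCB : C ≤ B) (hAt : A ≤ t) (h2t : 2 * t ≤ A + C) :
    2 * (A / (A + B + C)) + B / (B + 2 * t) ≤ 1 ∧
      1 ≤ 2 * (B / (B + 2 * t)) + A / (A + B + C) := by
  have hS : 0 < A + B + C := by linarith
  have hD : 0 < B + 2 * t := by linarith
  constructor
  · have hkey : A * B + A * t ≤ t * B + t * C := by
      nlinarith [mul_le_mul_of_nonneg_right hAt hB.le,
        mul_le_mul_of_nonneg_left hAC ht.le]
    have e : 2 * (A / (A + B + C)) + B / (B + 2 * t) =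
        (2 * A * (B + 2 * t) + B * (A + B + C)) / ((A + B + C) * (B + 2 * t)) := by
      field_simp
    rw [e, div_le_one (by positivity)]
    nlinarith [hkey]
  · have hkey : 2 * t * (B + C) ≤ 2 * A * B + B * B + B * C := by
      nlinarith [mul_le_mul_of_nonneg_right h2t (by linarith : (0:ℝ) ≤ B + C),
        mul_le_mul_of_nonneg_left hCB hA.le,
        mul_le_mul hCB hCB hC.le hB.le]
    have e : 2 * (B / (B + 2 * t)) + A / (A + B + C) =
        (2 * B * (A + B + C) + A * (B + 2 * t)) / ((B + 2 * t) * (A + B + C)) := by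
      field_simp
    rw [e, le_div_iff₀ (by positivity)]
    nlinarith [hkey]

/-- One step of the recursion preserves the invariant region. -/
private lemma Pinv_step {d : ℕ} {β x y : ℝ} (hβ0 : 0 < β) (hβ1 : β < 1)
    (h : Pinv x y) : Pinv (fU d β x y) (fL d β x y) := by
  obtain ⟨hy0, hx1, h2yx, h2xy⟩ := h
  have hxy : y ≤ x := by linarith
  have hx0 : 0 ≤ x := by linarith
  have hy1 : y ≤ 1 := by linarith
  have h1β : (0:ℝ) ≤ 1 - β := by linarith
  have ha : 0 < 1 - (1 - β) * x := aux_pos hβ0 hβ1 hx1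
  have hb : 0 < 1 - (1 - β) * y := aux_pos hβ0 hβ1 hy1
  have hc : 0 < 1 - (1 - β) * (1 - x - y) := aux_pos hβ0 hβ1 (by linarith)
  have hac : 1 - (1 - β) * x ≤ 1 - (1 - β) * (1 - x - y) := by nlinarith
  have hcb : 1 - (1 - β) * (1 - x - y) ≤ 1 - (1 - β) * y := by nlinarith
  set a := 1 - (1 - β) * x with ha_def
  set b := 1 - (1 - β) * y with hb_def
  set c := 1 - (1 - β) * (1 - x - y) with hc_def
  have hA : 0 < a ^ d := pow_pos ha d
  have hB : 0 < b ^ d := pow_pos hb d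
  have hCp : 0 < c ^ d := pow_pos hc d
  have hAC : a ^ d ≤ c ^ d := pow_le_pow_left₀ ha.le hac d
  have hCB : c ^ d ≤ b ^ d := pow_le_pow_left₀ hc.le hcb d
  set t := a ^ ((d : ℝ) / 2) * c ^ ((d : ℝ) / 2) with ht_def
  have htpos : 0 < t := mul_pos (Real.rpow_pos_of_pos ha _) (Real.rpow_pos_of_pos hc _)
  have htsq : t * t = a ^ d * c ^ d := by
    rw [ht_def, ← Real.mul_rpow ha.le hc.le]
    rw [← Real.rpow_add (mul_pos ha hc)]
    have : (d : ℝ) / 2 + (d : ℝ) / 2 = (d : ℝ) := by ring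
    rw [this, Real.rpow_natCast, mul_pow]
  have hAt : a ^ d ≤ t := by nlinarith [mul_pos hA htpos]
  have h2t : 2 * t ≤ a ^ d + c ^ d := by nlinarith [sq_nonneg (a ^ d - c ^ d)]
  have hfU : fU d β x y = b ^ d / (b ^ d + 2 * t) := by
    unfold fU; rw [ht_def, ha_def, hb_def, hc_def]; ring_nf
  have hfL : fL d β x y = a ^ d / (a ^ d + b ^ d + c ^ d) := by
    unfold fL; rw [ha_def, hb_def, hc_def]
  have hS : 0 < a ^ d + b ^ d + c ^ d := by positivity
  have hD : 0 < b ^ d + 2 * t := by positivity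
  refine ⟨?_, ?_, ?_, ?_⟩
  · rw [hfL]; positivity
  · rw [hfU, div_le_one hD]; linarith
  · rw [hfU, hfL]
    exact (frac_ineqs hA hB hCp htpos hAC hCB hAt h2t).1
  · rw [hfU, hfL]
    exact (frac_ineqs hA hB hCp htpos hAC hCB hAt h2t).2

private lemma ulSeq_inv (d : ℕ) {β : ℝ} (hβ0 : 0 < β) (hβ1 : β < 1) :
    ∀ n, Pinv (ulSeq d β n).1 (ulSeq d β n).2 := by
  intro n
  induction n with
  | zero => exact ⟨le_refl 0, le_refl 1, by norm_num [ulSeq], by norm_num [ulSeq]⟩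
  | succ n ih =>
      show Pinv (fU d β (ulSeq d β n).1 (ulSeq d β n).2)
        (fL d β (ulSeq d β n).1 (ulSeq d β n).2)
      exact Pinv_step hβ0 hβ1 ih

end ulAux

/-- For any fixed `d ≥ 2`, `0 < β < 1` and every `n`:
(1) `u_n ≥ u_{n+1}`; (2) `ℓ_n ≤ ℓ_{n+1}`; (3) `2ℓ_n + u_n ≤ 1 ≤ 2u_n + ℓ_n`,
where `u_n = (ulSeq d β n).1` and `ℓ_n = (ulSeq d β n).2`. -/
theorem ulSeq_monotone (d : ℕ) (hd : 2 ≤ d) (β : ℝ) (hβ0 : 0 < β) (hβ1 : β < 1) (n : ℕ) :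
    (ulSeq d β (n + 1)).1 ≤ (ulSeq d β n).1 ∧
    (ulSeq d β n).2 ≤ (ulSeq d β (n + 1)).2 ∧
    2 * (ulSeq d β n).2 + (ulSeq d β n).1 ≤ 1 ∧
    1 ≤ 2 * (ulSeq d β n).1 + (ulSeq d β n).2 := by
  have inv := ulSeq_inv d hβ0 hβ1
  have mono : ∀ m, (ulSeq d β (m + 1)).1 ≤ (ulSeq d β m).1 ∧
      (ulSeq d β m).2 ≤ (ulSeq d β (m + 1)).2 := by
    intro m
    induction m with
    | zero =>
        obtain ⟨h0, h1, h2, h3⟩ := inv 1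
        exact ⟨h1, h0⟩
    | succ m ih =>
        obtain ⟨hu, hl⟩ := ih
        obtain ⟨hy0, hx1, h2yx, h2xy⟩ := inv m
        obtain ⟨hy0', hx1', h2yx', h2xy'⟩ := inv (m + 1)
        have hx0 : 0 ≤ (ulSeq d β m).1 := by linarith
        have hx0' : 0 ≤ (ulSeq d β (m + 1)).1 := by linarith
        have hy1 : (ulSeq d β m).2 ≤ 1 := by linarith
        have hy1' : (ulSeq d β (m + 1)).2 ≤ 1 := by linarith
        constructor
        · show fU d β (ulSeq d β (m + 1)).1 (ulSeq d β (m + 1)).2 ≤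
            fU d β (ulSeq d β m).1 (ulSeq d β m).2
          calc fU d β (ulSeq d β (m + 1)).1 (ulSeq d β (m + 1)).2
              ≤ fU d β (ulSeq d β m).1 (ulSeq d β (m + 1)).2 :=
                fU_mono_x hβ0 hβ1 hy0' hy1' hx0' hu hx1 h2xy'
            _ ≤ fU d β (ulSeq d β m).1 (ulSeq d β m).2 :=
                fU_anti_y hβ0 hβ1 hx0 hx1 hy0 hl hy1'
        · show fL d β (ulSeq d β m).1 (ulSeq d β m).2 ≤
            fL d β (ulSeq d β (m + 1)).1 (ulSeq d β (m + 1)).2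
          calc fL d β (ulSeq d β m).1 (ulSeq d β m).2
              ≤ fL d β (ulSeq d β (m + 1)).1 (ulSeq d β m).2 :=
                fL_anti_x hβ0 hβ1 hy0 hy1 hx0' hu hx1
            _ ≤ fL d β (ulSeq d β (m + 1)).1 (ulSeq d β (m + 1)).2 :=
                fL_mono_y hβ0 hβ1 hx0' hx1' hy0 hl (by linarith)
  obtain ⟨h0, h1, h2, h3⟩ := inv n
  exact ⟨(mono n).1, (mono n).2, h2, h3⟩
end
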